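/- arXiv:1810.02139 — 7 statements merged into one kernel-verified Lean document; each statement's English description precedes it below -/
import Mathlib

section
/- A monomial x_{a_1} x_{a_2} ⋯ x_{a_r} in K[x_1,…,x_n] with a_1 ≤ a_2 ≤ ⋯ ≤ a_r is the leading term (with respect to degree lexicographic order with x_1 > ⋯ > x_n) of an r×r minor of some Hankel matrix H_t (with t ≥ r rows and entries x_1,…,x_n) if and only if the index sequence is a chain, i.e., a_i + 1 < a_{i+1} for all 1 ≤ i < r. -/
open MvPolynomial

noncomputable section

/-- Total degree of an exponent vector. -/
def expDeg (u : ℕ →₀ ℕ) : ℕ := u.sum fun _ e => e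

/-- Degree lexicographic order induced by `x_1 > x_2 > ⋯` :
`DegLexLt u v` means the monomial with exponent `u` is strictly smaller than
the one with exponent `v`. -/
def DegLexLt (u v : ℕ →₀ ℕ) : Prop :=
  expDeg u < expDeg v ∨ (expDeg u = expDeg v ∧ toLex u < toLex v)

/-- `u` is the exponent vector of the (unique, strictly largest) leading term of `f`
with respect to degree lexicographic order. -/
def IsLeadMono {K : Type*} [CommRing K] (f : MvPolynomial ℕ K) (u : ℕ →₀ ℕ) : Prop :=
  u ∈ f.support ∧ ∀ v ∈ f.support, v ≠ u → DegLexLt v u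

/-- The initial ideal of `I` : the ideal generated by the leading monomials of
elements of `I`. -/
def initialIdeal {K : Type*} [CommRing K] (I : Ideal (MvPolynomial ℕ K)) :
    Ideal (MvPolynomial ℕ K) :=
  Ideal.span {m | ∃ f ∈ I, ∃ u, IsLeadMono f u ∧ m = monomial u (1 : K)}

/-- `a 1, …, a r` is a chain (1-indexed strictly increasing sequence with gaps ≥ 2). -/
def IsChainOn (r : ℕ) (a : ℕ → ℕ) : Prop := ∀ i, 1 ≤ i → i < r → a i + 1 < a (i + 1)

/-- Exponent vector of the monomial `x_{a 1} ⋯ x_{a r}`. -/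
def chainExp (r : ℕ) (a : ℕ → ℕ) : ℕ →₀ ℕ := ∑ i ∈ Finset.Icc 1 r, Finsupp.single (a i) 1

/-- The maximal minor of a Hankel matrix whose main diagonal is `x_{a 1}, …, x_{a r}`;
its (i,j) entry (0-indexed) is `x_{a (j+1) + i - j}`. -/
def minorOfChain (K : Type*) [CommRing K] (r : ℕ) (a : ℕ → ℕ) : MvPolynomial ℕ K :=
  (Matrix.of fun i j : Fin r =>
    (X (a ((j : ℕ) + 1) + (i : ℕ) - (j : ℕ)) : MvPolynomial ℕ K)).det

/-- The chain `a` is the diagonal chain of a maximal minor of the Hankel matrix with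
`r` rows built from the variables `x_lo, …, x_hi`. -/
def FitsHankel (lo hi r : ℕ) (a : ℕ → ℕ) : Prop :=
  IsChainOn r a ∧ ∀ j, 1 ≤ j → j ≤ r → lo + (j - 1) ≤ a j ∧ a j + (r - j) ≤ hi

/-- The ideal of maximal minors of the Hankel matrix with `r` rows on `x_lo, …, x_hi`. -/
def hankelIdeal (K : Type*) [CommRing K] (lo hi r : ℕ) : Ideal (MvPolynomial ℕ K) :=
  Ideal.span {f | ∃ a : ℕ → ℕ, FitsHankel lo hi r a ∧ f = minorOfChain K r a}

/-- `Interval(a) = ⋃_{2 ≤ i ≤ r} {a_i - 1, a_i}`. -/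
def IntervalOf (r : ℕ) (a : ℕ → ℕ) : Set ℕ :=
  {x | ∃ i, 2 ≤ i ∧ i ≤ r ∧ (x = a i - 1 ∨ x = a i)}

/- Control functions with Δ = 0. -/
def omegaD (r s : ℕ) : ℕ := if r < s then r else s - 1
def omegaC (r s : ℕ) : ℕ := if r ≤ s then r else s
def omegaAD (r s : ℕ) : ℕ := if r ≤ s then r - 1 else s

/-- The three standard-form conditions for a pair of chains, with bounds
`d = Ω_d`, `c = Ω_c`, `ad = Ω_ad`. -/
def StdPairCond (d c ad r s : ℕ) (a b : ℕ → ℕ) : Prop :=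
  ((∀ i, 1 ≤ i → i ≤ d → a i ≤ b (i + 1)) ∨
    (∃ h, 1 ≤ h ∧ h ≤ d ∧ b (h + 1) < a h ∧
      ∀ i, h ≤ i → i ≤ d → a i ∈ IntervalOf s b)) ∧
  ((∀ i, 1 ≤ i → i ≤ c → a i ≤ b i) ∨
    (∃ h, 1 ≤ h ∧ h ≤ c ∧ b h < a h ∧
      ∀ i, h ≤ i → i ≤ c → a i ∈ IntervalOf s b)) ∧
  ((∀ i, 1 ≤ i → i ≤ ad → b i ≤ a (i + 1)) ∨
    (∃ h, 1 ≤ h ∧ h ≤ ad ∧ a (h + 1) < b h ∧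
      ∀ i, h ≤ i → i ≤ ad → b i ∈ IntervalOf r a))

/-- Standard form for a pair of (unlabeled) chains, with Δ = 0. -/
def StdPair (r s : ℕ) (a b : ℕ → ℕ) : Prop :=
  StdPairCond (omegaD r s) (omegaC r s) (omegaAD r s) r s a b

def HasDiagRel (r s : ℕ) (a b : ℕ → ℕ) : Prop :=
  ∃ h k, 1 ≤ h ∧ h ≤ omegaD r s ∧ h + 1 ≤ k ∧ k ≤ s ∧ b k < a h ∧ a h ∉ IntervalOf s b

def HasColRel (r s : ℕ) (a b : ℕ → ℕ) : Prop :=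
  ∃ h, 1 ≤ h ∧ h ≤ omegaC r s ∧ b h < a h ∧ a h ∉ IntervalOf s b

def HasADRel (r s : ℕ) (a b : ℕ → ℕ) : Prop :=
  ∃ h k, 1 ≤ h ∧ h ≤ omegaAD r s ∧ h + 1 ≤ k ∧ k ≤ r ∧ a k < b h ∧ b h ∉ IntervalOf r a

/-- A diagonal relation move (swap of a block of entries), with Ω_d bound `d`. -/
def DiagMoveP (d s : ℕ) (a b a' b' : ℕ → ℕ) : Prop :=
  ∃ h k v, 1 ≤ h ∧ h ≤ d ∧ h + 1 ≤ k ∧ k ≤ s ∧ b k < a h ∧ a h ∉ IntervalOf s b ∧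
    v ≤ h - 1 ∧ (∀ i, i ≤ v → b (k - i) < a (h - i)) ∧
    (v ≠ h - 1 → a (h - v - 1) ≤ b (k - v - 1)) ∧
    (∀ i, a' i = if h - v ≤ i ∧ i ≤ h then b (i + k - h) else a i) ∧
    (∀ i, b' i = if k - v ≤ i ∧ i ≤ k then a (i + h - k) else b i)

/-- A column-wise relation move, with Ω_c bound `c`. -/
def ColMoveP (c s : ℕ) (a b a' b' : ℕ → ℕ) : Prop :=
  ∃ h v, 1 ≤ h ∧ h ≤ c ∧ b h < a h ∧ a h ∉ IntervalOf s b ∧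
    v ≤ h - 1 ∧ (∀ i, i ≤ v → b (h - i) < a (h - i)) ∧
    (v ≠ h - 1 → a (h - v - 1) ≤ b (h - v - 1)) ∧
    (∀ i, a' i = if h - v ≤ i ∧ i ≤ h then b i else a i) ∧
    (∀ i, b' i = if h - v ≤ i ∧ i ≤ h then a i else b i)

/-- An anti-diagonal relation move, with Ω_ad bound `ad`. -/
def ADMoveP (ad r : ℕ) (a b a' b' : ℕ → ℕ) : Prop :=
  ∃ h k v, 1 ≤ h ∧ h ≤ ad ∧ h + 1 ≤ k ∧ k ≤ r ∧ a k < b h ∧ b h ∉ IntervalOf r a ∧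
    v ≤ h - 1 ∧ (∀ i, i ≤ v → a (k - i) < b (h - i)) ∧
    (v ≠ h - 1 → b (h - v - 1) ≤ a (k - v - 1)) ∧
    (∀ i, a' i = if k - v ≤ i ∧ i ≤ k then b (i + h - k) else a i) ∧
    (∀ i, b' i = if h - v ≤ i ∧ i ≤ h then a (i + k - h) else b i)

/-- A relation move on a pair of (unlabeled) chains (Δ = 0). -/
def Move (r s : ℕ) (a b a' b' : ℕ → ℕ) : Prop :=
  DiagMoveP (omegaD r s) s a b a' b' ∨ ColMoveP (omegaC r s) s a b a' b' ∨
    ADMoveP (omegaAD r s) r a b a' b'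

/- Labels and labeled chains, for the family of close cuts. -/
def IsLabel (n : ℕ) (σ : ℕ × ℕ) : Prop :=
  σ = (1, n) ∨ σ = (1, n - 1) ∨ σ = (2, n) ∨ σ = (2, n - 1)

def LabeledChain (n : ℕ) (σ : ℕ × ℕ) (r : ℕ) (a : ℕ → ℕ) : Prop :=
  IsLabel n σ ∧ 1 ≤ r ∧ FitsHankel σ.1 σ.2 r a

/-- Order of labels: (1,n-1) > (1,n) > (2,n-1) > (2,n). -/
def labelRank (n : ℕ) (σ : ℕ × ℕ) : ℕ :=
  if σ = (1, n - 1) then 3 else if σ = (1, n) then 2 else if σ = (2, n - 1) then 1 else 0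

/-- `(σ,a) ≥_c (γ,b)`. -/
def GeC (n : ℕ) (σ : ℕ × ℕ) (r : ℕ) (a : ℕ → ℕ) (γ : ℕ × ℕ) (s : ℕ) (b : ℕ → ℕ) : Prop :=
  labelRank n γ < labelRank n σ ∨
    (σ = γ ∧ (chainExp s b = chainExp r a ∨ DegLexLt (chainExp s b) (chainExp r a)))

/-- The function Δ for a pair of labeled chains. -/
def delta (n : ℕ) (σ γ : ℕ × ℕ) (r s : ℕ) (a b : ℕ → ℕ) : ℕ :=
  if (r ≤ s ∧ a r = n ∧ γ.2 = n - 1) ∨ (s < r ∧ b s = n ∧ σ.2 = n - 1) then 1 else 0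

def omegaD' (Δ r s : ℕ) : ℕ := if r < s then r - Δ else s - 1
def omegaC' (Δ r s : ℕ) : ℕ := if r ≤ s then r - Δ else s
def omegaAD' (Δ r s : ℕ) : ℕ := if r ≤ s then r - 1 else s - Δ

/-- Standard form for a pair of labeled chains `(σ,a) ≥_c (γ,b)`. -/
def StdPairL (n : ℕ) (σ γ : ℕ × ℕ) (r s : ℕ) (a b : ℕ → ℕ) : Prop :=
  StdPairCond (omegaD' (delta n σ γ r s a b) r s) (omegaC' (delta n σ γ r s a b) r s)
    (omegaAD' (delta n σ γ r s a b) r s) r s a b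

/-- A relation move on a pair of labeled chains (Δ as prescribed by the labels). -/
def MoveL (n : ℕ) (σ γ : ℕ × ℕ) (r s : ℕ) (a b a' b' : ℕ → ℕ) : Prop :=
  DiagMoveP (omegaD' (delta n σ γ r s a b) r s) s a b a' b' ∨
  ColMoveP (omegaC' (delta n σ γ r s a b) r s) s a b a' b' ∨
  ADMoveP (omegaAD' (delta n σ γ r s a b) r s) r a b a' b'

/-- A tabel with `l` rows: row `i` (1 ≤ i ≤ l) is the labeled chain
`(lab i, ent i)` of length `len i`, and the rows are ordered decreasingly by `≥_c`. -/
def IsTabel (n l : ℕ) (lab : ℕ → ℕ × ℕ) (len : ℕ → ℕ) (ent : ℕ → ℕ → ℕ) : Prop :=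
  (∀ i, 1 ≤ i → i ≤ l → LabeledChain n (lab i) (len i) (ent i)) ∧
  (∀ i, 1 ≤ i → i < l →
    GeC n (lab i) (len i) (ent i) (lab (i + 1)) (len (i + 1)) (ent (i + 1)))

/-- A tabel is a standard form: the standard-form conditions hold for each
pair of rows `i < j`. -/
def StdTabel (n l : ℕ) (lab : ℕ → ℕ × ℕ) (len : ℕ → ℕ) (ent : ℕ → ℕ → ℕ) : Prop :=
  ∀ i j, 1 ≤ i → i < j → j ≤ l →
    StdPairL n (lab i) (lab j) (len i) (len j) (ent i) (ent j)

/-- Standardness of a quadratic factor `x_i · z_{σ,a}` (condition (ii) of the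
standard-monomial construction). -/
def XZStd (i : ℕ) (σ : ℕ × ℕ) (r : ℕ) (a : ℕ → ℕ) : Prop :=
  i ≤ a 1 ∨ (a 1 < i ∧ (σ.2 < i ∨ i ∈ IntervalOf r a))

/-- A general r×r minor of a Hankel matrix: rows `p 1 < … < p r`,
columns `q 1 < … < q r`, entry (i,j) = x_{p i + q j - 1}. -/
def genMinor (K : Type*) [CommRing K] (r : ℕ) (p q : ℕ → ℕ) : MvPolynomial ℕ K :=
  (Matrix.of fun i j : Fin r =>
    (X (p ((i : ℕ) + 1) + q ((j : ℕ) + 1) - 1) : MvPolynomial ℕ K)).det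

/-!
The entries `x_{p_i + q_j - 1}` of a Hankel minor with rows `p_1 < ⋯ < p_r` and columns
`q_1 < ⋯ < q_r` have indices strictly increasing along rows and columns. Hence the diagonal
term is the lex-largest term of the Leibniz expansion: if `k` is the first position moved by
`σ`, the diagonal has the factor `x_{p_k + q_k - 1}`, while every factor of the `σ`-term from
position `k` on has a strictly larger index and the earlier factors agree. So the leading term
is `∏ x_{p_i + q_i - 1}`, whose indices are a chain; conversely a chain `a` is the diagonal of
the minor with rows `1, …, r` and columns `a_j - j + 1`.
-/

open Finset

lemma DegLexLt.asymm {u v : ℕ →₀ ℕ} (huv : DegLexLt u v) : ¬DegLexLt v u := by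
  rintro (hvu | ⟨hdeg, hlex⟩) <;> rcases huv with huv | ⟨hdeg', hlex'⟩
  all_goals first | omega | exact lt_asymm hlex hlex'

lemma IsLeadMono.unique {K : Type*} [CommRing K] {f : MvPolynomial ℕ K} {u v : ℕ →₀ ℕ}
    (hu : IsLeadMono f u) (hv : IsLeadMono f v) : u = v := by
  by_contra hne
  exact (hu.2 v hv.1 (Ne.symm hne)).asymm (hv.2 u hu.1 hne)

section Leibniz

variable {r : ℕ} (c : Fin r → Fin r → ℕ)

def leibnizExp (σ : Equiv.Perm (Fin r)) : ℕ →₀ ℕ := ∑ i, Finsupp.single (c (σ i) i) 1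

lemma degree_leibnizExp (σ : Equiv.Perm (Fin r)) : (leibnizExp c σ).degree = r := by
  simp [leibnizExp]

lemma leibnizExp_apply (σ : Equiv.Perm (Fin r)) (d : ℕ) :
    leibnizExp c σ d = #{i | c (σ i) i = d} := by
  simp only [leibnizExp, Finsupp.finsetSum_apply, Finsupp.single_apply, sum_boole, Nat.cast_id]

lemma coeff_det_X {K : Type*} [CommRing K] (u : ℕ →₀ ℕ) :
    coeff u (Matrix.of fun i j => (X (c i j) : MvPolynomial ℕ K)).det =
      ∑ σ : Equiv.Perm (Fin r), Equiv.Perm.sign σ • if leibnizExp c σ = u then (1 : K) else 0 := by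
  rw [Matrix.det_apply, coeff_sum]
  refine sum_congr rfl fun σ _ => ?_
  have hterm : ∏ i, (Matrix.of fun i j => (X (c i j) : MvPolynomial ℕ K)) (σ i) i =
      monomial (leibnizExp c σ) 1 := by
    rw [leibnizExp, monomial_sum_one]
    rfl
  rw [coeff_smul, hterm, coeff_monomial]

variable {c}

lemma toLex_leibnizExp_lt_one (hrow : ∀ j, StrictMono (c · j)) (hcol : ∀ i, StrictMono (c i))
    {σ : Equiv.Perm (Fin r)} (hσ : σ ≠ 1) : toLex (leibnizExp c σ) < toLex (leibnizExp c 1) := by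
  obtain ⟨k, hk, hmin⟩ : ∃ k, σ k ≠ k ∧ ∀ i, σ i ≠ i → k ≤ i := by
    obtain ⟨i, hi⟩ : ∃ i, σ i ≠ i := by
      by_contra! h
      exact hσ (Equiv.ext h)
    obtain ⟨k, hk, hmin⟩ := wellFounded_lt.has_min {i | σ i ≠ i} ⟨i, hi⟩
    exact ⟨k, hk, fun j hj => not_lt.1 (hmin j hj)⟩
  have hfix : ∀ i < k, σ i = i := fun i hi => by_contra fun h => (hmin i h).not_gt hi
  have hmoved : ∀ i, k ≤ i → k ≤ σ i := by
    intro i hi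
    by_contra! h
    exact (σ.injective (hfix _ h) ▸ h).not_ge hi
  have hdiag : ∀ i, k < i → c k k < c i i := fun i hi =>
    (hrow k hi).trans (hcol i hi)
  have hoff : ∀ i, k ≤ i → c k k < c (σ i) i := by
    intro i hi
    rcases hi.lt_or_eq with hi | rfl
    · exact ((hrow k).monotone (hmoved i hi.le)).trans_lt (hcol _ hi)
    · exact hrow _ ((hmoved _ le_rfl).lt_of_ne (Ne.symm hk))
  rw [Finsupp.Lex.lt_iff]
  refine ⟨c k k, fun d hd => ?_, ?_⟩
  · simp only [ofLex_toLex, leibnizExp_apply, Equiv.Perm.one_apply]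
    congr 1
    refine filter_congr fun i _ => ?_
    rcases lt_or_ge i k with hi | hi
    · rw [hfix i hi]
    · have := hoff i hi
      have : c k k ≤ c i i := hi.lt_or_eq.elim (fun h => (hdiag i h).le) (fun h => h ▸ le_rfl)
      omega
  · simp only [ofLex_toLex, leibnizExp_apply, Equiv.Perm.one_apply]
    have hnone : #{i | c (σ i) i = c k k} = 0 := by
      refine card_eq_zero.2 (filter_eq_empty_iff.2 fun i _ => ?_)
      rcases lt_or_ge i k with hi | hi
      · rw [hfix i hi]
        exact ((hrow i).monotone hi.le |>.trans_lt (hcol k hi)).ne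
      · exact (hoff i hi).ne'
    rw [hnone]
    exact card_pos.2 ⟨k, mem_filter.2 ⟨mem_univ k, rfl⟩⟩

theorem isLeadMono_det_X {K : Type*} [CommRing K] [Nontrivial K]
    (hrow : ∀ j, StrictMono (c · j)) (hcol : ∀ i, StrictMono (c i)) :
    IsLeadMono (Matrix.of fun i j => (X (c i j) : MvPolynomial ℕ K)).det (leibnizExp c 1) := by
  have hne : ∀ σ ≠ 1, leibnizExp c σ ≠ leibnizExp c 1 := fun σ hσ h =>
    (toLex_leibnizExp_lt_one hrow hcol hσ).ne (congrArg toLex h)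
  constructor
  · rw [MvPolynomial.mem_support_iff, coeff_det_X, sum_eq_single (1 : Equiv.Perm (Fin r))]
    · simp
    · intro σ _ hσ
      rw [if_neg (hne σ hσ), smul_zero]
    · exact fun h => absurd (mem_univ 1) h
  · intro v hv hvne
    rw [MvPolynomial.mem_support_iff, coeff_det_X] at hv
    obtain ⟨σ, -, hσv⟩ := exists_ne_zero_of_sum_ne_zero hv
    have hσ : leibnizExp c σ = v := by
      by_contra h
      exact hσv (by rw [if_neg h, smul_zero])
    subst hσ
    refine Or.inr ⟨?_, toLex_leibnizExp_lt_one hrow hcol fun h => hvne (h ▸ rfl)⟩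
    exact (degree_leibnizExp c σ).trans (degree_leibnizExp c 1).symm

end Leibniz

lemma strictMonoOn_Icc_of_lt_add_one {α : Type*} [Preorder α] {f : ℕ → α} {r : ℕ}
    (h : ∀ i, 1 ≤ i → i < r → f i < f (i + 1)) : StrictMonoOn f (Set.Icc 1 r) :=
  strictMonoOn_of_lt_add_one Set.ordConnected_Icc fun i _ hi hi' => h i hi.1 hi'.2

lemma monotoneOn_Icc_of_le_add_one {α : Type*} [Preorder α] {f : ℕ → α} {r : ℕ}
    (h : ∀ i, 1 ≤ i → i < r → f i ≤ f (i + 1)) : MonotoneOn f (Set.Icc 1 r) :=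
  monotoneOn_of_le_add_one Set.ordConnected_Icc fun i _ hi hi' => h i hi.1 hi'.2

lemma chainExp_eq_toFinsupp (r : ℕ) (a : ℕ → ℕ) :
    chainExp r a = Multiset.toFinsupp ((List.range' 1 r).map a : List ℕ) := by
  have hIcc : (Icc 1 r).val = (List.range' 1 r : Multiset ℕ) := by simp [Nat.Icc_eq_range']
  rw [← Multiset.map_coe, ← hIcc, ← Multiset.sum_map_singleton ((Icc 1 r).val.map a),
    map_multiset_sum, Multiset.map_map, Multiset.map_map]
  simp only [Function.comp_def, Multiset.toFinsupp_singleton]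
  rfl

lemma chainExp_congr {r : ℕ} {a b : ℕ → ℕ} (h : Set.EqOn a b (Set.Icc 1 r)) :
    chainExp r a = chainExp r b :=
  sum_congr rfl fun i hi => by rw [h (mem_Icc.1 hi)]

lemma chainExp_injOn {r : ℕ} {a b : ℕ → ℕ} (ha : MonotoneOn a (Set.Icc 1 r))
    (hb : MonotoneOn b (Set.Icc 1 r)) (h : chainExp r a = chainExp r b) :
    Set.EqOn a b (Set.Icc 1 r) := by
  have hmem : ∀ x, x ∈ List.range' 1 r ↔ x ∈ Set.Icc 1 r := fun x => by
    simp only [List.mem_range'_1, Set.mem_Icc]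
    omega
  have hsorted : ∀ f : ℕ → ℕ, MonotoneOn f (Set.Icc 1 r) →
      ((List.range' 1 r).map f).Pairwise (· ≤ ·) := fun f hf =>
    List.pairwise_map.2 <| (List.pairwise_le_range' 1).imp_of_mem fun hx hy hxy =>
      hf ((hmem _).1 hx) ((hmem _).1 hy) hxy
  rw [chainExp_eq_toFinsupp, chainExp_eq_toFinsupp, Multiset.toFinsupp.injective.eq_iff,
    Multiset.coe_eq_coe] at h
  intro i hi
  exact List.map_inj_left.1 (h.eq_of_pairwise' (hsorted a ha) (hsorted b hb)) i ((hmem i).2 hi)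

lemma isLeadMono_genMinor {K : Type*} [CommRing K] [Nontrivial K] {r : ℕ} {p q : ℕ → ℕ}
    (hp : StrictMonoOn p (Set.Icc 1 r)) (hq : StrictMonoOn q (Set.Icc 1 r))
    (hp1 : ∀ i ∈ Set.Icc 1 r, 1 ≤ p i) :
    IsLeadMono (genMinor K r p q) (chainExp r fun i => p i + q i - 1) := by
  have hmem : ∀ i : Fin r, (i : ℕ) + 1 ∈ Set.Icc 1 r := fun i => ⟨by omega, i.isLt⟩
  have hexp : leibnizExp (fun i j : Fin r => p (i + 1) + q (j + 1) - 1) 1 =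
      chainExp r fun i => p i + q i - 1 := by
    simp only [leibnizExp, chainExp, Equiv.Perm.one_apply]
    rw [Fin.sum_univ_eq_sum_range (fun i => Finsupp.single (p (i + 1) + q (i + 1) - 1) 1),
      range_eq_Ico, sum_Ico_add' fun i => Finsupp.single (p i + q i - 1) 1]
    rfl
  rw [genMinor, ← hexp]
  refine isLeadMono_det_X (fun j i i' hii' => ?_) (fun i j j' hjj' => ?_)
  · have := hp (hmem i) (hmem i') (by simpa using hii')
    have := hp1 _ (hmem i)
    dsimp only
    omega
  · have := hq (hmem j) (hmem j') (by simpa using hjj')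
    have := hp1 _ (hmem i)
    omega

lemma IsChainOn.add_two_mul_le {r : ℕ} {a : ℕ → ℕ} (h : IsChainOn r a) {i j : ℕ}
    (hi : 1 ≤ i) (hij : i ≤ j) (hj : j ≤ r) : a i + 2 * (j - i) ≤ a j := by
  have hmono : MonotoneOn (fun i => (a i : ℤ) - 2 * i) (Set.Icc 1 r) :=
    monotoneOn_Icc_of_le_add_one fun i hi hir => by
      have := h i hi hir
      push_cast
      omega
  have := hmono ⟨hi, hij.trans hj⟩ ⟨hi.trans hij, hj⟩ hij
  simp only at this
  omega

lemma IsLeadMono.isChainOn_of_genMinor {K : Type*} [CommRing K] [Nontrivial K] {r : ℕ}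
    {p q a : ℕ → ℕ} (hlead : IsLeadMono (genMinor K r p q) (chainExp r a))
    (hp : StrictMonoOn p (Set.Icc 1 r)) (hq : StrictMonoOn q (Set.Icc 1 r))
    (hp1 : ∀ i ∈ Set.Icc 1 r, 1 ≤ p i) (ha : MonotoneOn a (Set.Icc 1 r)) : IsChainOn r a := by
  have hdiag_mono : MonotoneOn (fun i => p i + q i - 1) (Set.Icc 1 r) := fun i hi j hj hij => by
    have := hp.monotoneOn hi hj hij
    have := hq.monotoneOn hi hj hij
    dsimp only
    omega
  have hdiag := chainExp_injOn ha hdiag_mono (hlead.unique (isLeadMono_genMinor hp hq hp1))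
  intro i hi hir
  have : a i = p i + q i - 1 := hdiag ⟨hi, hir.le⟩
  have : a (i + 1) = p (i + 1) + q (i + 1) - 1 := hdiag ⟨by omega, hir⟩
  have : p i < p (i + 1) := hp ⟨hi, hir.le⟩ ⟨by omega, hir⟩ (lt_add_one i)
  have : q i < q (i + 1) := hq ⟨hi, hir.le⟩ ⟨by omega, hir⟩ (lt_add_one i)
  have := hp1 i ⟨hi, hir.le⟩
  omega

lemma IsChainOn.add_one_sub_lt {r : ℕ} {a : ℕ → ℕ} (h : IsChainOn r a) {j : ℕ} (hj : 1 ≤ j)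
    (hjr : j < r) (haj : j ≤ a j) : a j + 1 - j < a (j + 1) + 1 - (j + 1) := by
  have := h j hj hjr
  omega

lemma IsChainOn.isLeadMono_genMinor {K : Type*} [CommRing K] [Nontrivial K] {r : ℕ}
    {a : ℕ → ℕ} (h : IsChainOn r a) (ha : ∀ j ∈ Set.Icc 1 r, j ≤ a j) :
    IsLeadMono (genMinor K r id fun j => a j + 1 - j) (chainExp r a) := by
  have hdiag : chainExp r a = chainExp r fun i => id i + (a i + 1 - i) - 1 :=
    chainExp_congr fun j hj => by
      have := ha j hj
      dsimp only [id]
      omega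
  rw [hdiag]
  refine _root_.isLeadMono_genMinor (strictMonoOn_Icc_of_lt_add_one fun i _ _ => lt_add_one i)
    (strictMonoOn_Icc_of_lt_add_one fun j hj hjr => ?_) fun i hi => hi.1
  exact h.add_one_sub_lt hj hjr (ha j ⟨hj, hjr.le⟩)

theorem stmt0_general {K : Type*} [Field K] (n r : ℕ) (a : ℕ → ℕ)
    (hmono : ∀ i, 1 ≤ i → i < r → a i ≤ a (i + 1))
    (hb : ∀ i, 1 ≤ i → i ≤ r → 1 ≤ a i ∧ a i ≤ n) :
    (∃ t, r ≤ t ∧ t ≤ (n + 1) / 2 ∧ ∃ p q : ℕ → ℕ,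
        (∀ i, 1 ≤ i → i < r → p i < p (i + 1)) ∧
        (∀ j, 1 ≤ j → j < r → q j < q (j + 1)) ∧
        (∀ i, 1 ≤ i → i ≤ r → 1 ≤ p i ∧ p i ≤ t) ∧
        (∀ j, 1 ≤ j → j ≤ r → 1 ≤ q j ∧ q j ≤ n - t + 1) ∧
        IsLeadMono (genMinor K r p q) (chainExp r a)) ↔
      IsChainOn r a := by
  constructor
  · rintro ⟨_, -, -, p, q, hp, hq, hpb, -, hlead⟩
    exact hlead.isChainOn_of_genMinor (strictMonoOn_Icc_of_lt_add_one hp)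
      (strictMonoOn_Icc_of_lt_add_one hq) (fun i hi => (hpb i hi.1 hi.2).1)
      (monotoneOn_Icc_of_le_add_one hmono)
  · intro hchain
    have hbounds : ∀ j, 1 ≤ j → j ≤ r → j ≤ a j ∧ a j + (r - j) ≤ n := fun j hj hjr => by
      have := hchain.add_two_mul_le le_rfl hj hjr
      have := hchain.add_two_mul_le hj hjr le_rfl
      have := hb 1 le_rfl (hj.trans hjr)
      have := hb r (hj.trans hjr) le_rfl
      omega
    refine ⟨r, le_rfl, ?_, id, fun j => a j + 1 - j, fun i _ _ => lt_add_one i,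
      fun j hj hjr => hchain.add_one_sub_lt hj hjr (hbounds j hj hjr.le).1,
      fun i hi hir => ⟨hi, hir⟩, fun j hj hjr => ?_,
      hchain.isLeadMono_genMinor fun j hj => (hbounds j hj.1 hj.2).1⟩
    · rcases Nat.eq_zero_or_pos r with rfl | hr
      · exact Nat.zero_le _
      · have := hchain.add_two_mul_le le_rfl hr le_rfl
        have := hb 1 le_rfl hr
        have := hb r hr le_rfl
        omega
    · have := hbounds j hj hjr
      dsimp only
      omega

/-- a monomial `x_{a 1} ⋯ x_{a r}` with weakly increasing indices is the
leading term of an r×r minor of some Hankel matrix `H_t` (t ≥ r) iff `a` is a chain. -/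
theorem stmt0 {K : Type*} [Field K] (n r : ℕ) (hr : 1 ≤ r) (a : ℕ → ℕ)
    (hmono : ∀ i, 1 ≤ i → i < r → a i ≤ a (i + 1))
    (hb : ∀ i, 1 ≤ i → i ≤ r → 1 ≤ a i ∧ a i ≤ n) :
    (∃ t, r ≤ t ∧ t ≤ (n + 1) / 2 ∧ ∃ p q : ℕ → ℕ,
        (∀ i, 1 ≤ i → i < r → p i < p (i + 1)) ∧
        (∀ j, 1 ≤ j → j < r → q j < q (j + 1)) ∧
        (∀ i, 1 ≤ i → i ≤ r → 1 ≤ p i ∧ p i ≤ t) ∧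
        (∀ j, 1 ≤ j → j ≤ r → 1 ≤ q j ∧ q j ≤ n - t + 1) ∧
        IsLeadMono (genMinor K r p q) (chainExp r a)) ↔
      IsChainOn r a :=
  stmt0_general n r a hmono hb
end
end

section
/- The diagonal term (product of main-diagonal entries) of any maximal minor [a_1,…,a_t | columns] of the Hankel matrix H_t is the unique term of that minor that is largest with respect to the degree lexicographic order induced by x_1 > x_2 > ⋯ > x_n; that is, degree lexicographic order is a diagonal term order for Hankel matrices. -/
open MvPolynomial

noncomputable section

/-!
Expand the minor over permutations: the term of `σ` has the variable `x_{a_{j+1} + σ j - j}` in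
column `j`, so every term has degree `t` and only the lexicographic comparison matters. For
`σ ≠ 1` let `j₀` be the first column it moves; then `σ j₀ > j₀` and every moved column `j` has
`j, σ j ≥ j₀`. Because consecutive chain entries differ by at least two,
`a_{j+1} ≥ a_{j₀+1} + 2 (j - j₀)`, so every moved column carries a variable of index larger than
`a_{j₀+1}`, while the fixed columns agree with the diagonal and never carry `x_{a_{j₀+1}}`. Hence
the term of `σ` agrees with the diagonal term before `x_{a_{j₀+1}}` and lacks that variable.
-/

lemma expDeg_eq_degree (u : ℕ →₀ ℕ) : expDeg u = u.degree := rfl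

lemma DegLexLt.ne {u v : ℕ →₀ ℕ} (h : DegLexLt u v) : u ≠ v := by
  rintro rfl
  rcases h with h | ⟨-, h⟩ <;> exact lt_irrefl _ h

lemma expDeg_sum_single {ι : Type*} (s : Finset ι) (f : ι → ℕ) :
    expDeg (∑ j ∈ s, Finsupp.single (f j) 1) = s.card := by
  simp [expDeg_eq_degree]

lemma toLex_sum_single_lt {ι : Type*} (s : Finset ι) {f g : ι → ℕ} (m : ℕ)
    (hfg : ∀ j ∈ s, f j ≠ g j → m < f j ∧ m ≤ g j) (hf : ∀ j ∈ s, f j ≠ m)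
    (hg : ∃ j ∈ s, g j = m) :
    toLex (∑ j ∈ s, Finsupp.single (f j) 1) < toLex (∑ j ∈ s, Finsupp.single (g j) 1) := by
  refine ⟨m, fun k hk => ?_, ?_⟩ <;>
    simp only [ofLex_toLex, Finsupp.finsetSum_apply, Finsupp.single_apply]
  · refine Finset.sum_congr rfl fun j hj => ?_
    by_cases hj' : f j = g j
    · rw [hj']
    · have := hfg j hj hj'
      rw [if_neg (by omega), if_neg (by omega)]
  · obtain ⟨j₀, hj₀, hgj₀⟩ := hg
    rw [Finset.sum_eq_zero fun j hj => if_neg (hf j hj)]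
    exact Finset.sum_pos' (fun _ _ => Nat.zero_le _) ⟨j₀, hj₀, by simp [hgj₀]⟩

lemma degLexLt_sum_single {ι : Type*} (s : Finset ι) {f g : ι → ℕ}
    (h : toLex (∑ j ∈ s, Finsupp.single (f j) 1) < toLex (∑ j ∈ s, Finsupp.single (g j) 1)) :
    DegLexLt (∑ j ∈ s, Finsupp.single (f j) 1) (∑ j ∈ s, Finsupp.single (g j) 1) :=
  Or.inr ⟨by rw [expDeg_sum_single, expDeg_sum_single], h⟩

lemma isLeadMono_sum_monomial {R ι : Type*} [CommRing R] (s : Finset ι) (e : ι → ℕ →₀ ℕ)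
    (c : ι → R) {i₀ : ι} (hi₀ : i₀ ∈ s) (hc : c i₀ ≠ 0)
    (hlt : ∀ i ∈ s, i ≠ i₀ → DegLexLt (e i) (e i₀)) :
    IsLeadMono (∑ i ∈ s, monomial (e i) (c i)) (e i₀) := by
  classical
  have hcoeff : ∀ v, coeff v (∑ i ∈ s, monomial (e i) (c i)) =
      ∑ i ∈ s, if e i = v then c i else 0 := fun v => by
    simp only [coeff_sum, coeff_monomial]
  refine ⟨?_, fun v hv hne => ?_⟩
  · rw [MvPolynomial.mem_support_iff, hcoeff,
      Finset.sum_eq_single_of_mem i₀ hi₀ fun i hi hi₀' => if_neg (hlt i hi hi₀').ne, if_pos rfl]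
    exact hc
  · obtain ⟨i, hi, rfl⟩ : ∃ i ∈ s, e i = v := by
      by_contra! h
      rw [MvPolynomial.mem_support_iff, hcoeff, Finset.sum_eq_zero fun i hi => if_neg (h i hi)] at hv
      exact hv rfl
    exact hlt i hi (by rintro rfl; exact hne rfl)

lemma det_of_X {R : Type*} [CommRing R] {r : ℕ} (idx : Fin r → Fin r → ℕ) :
    (Matrix.of fun i j => (X (idx i j) : MvPolynomial ℕ R)).det =
      ∑ σ : Equiv.Perm (Fin r),
        monomial (∑ j, Finsupp.single (idx (σ j) j) 1) (Equiv.Perm.sign σ • (1 : R)) := by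
  rw [Matrix.det_apply]
  refine Finset.sum_congr rfl fun σ _ => ?_
  simp only [Matrix.of_apply, X, ← monomial_sum_one, ← smul_monomial]

lemma Equiv.Perm.exists_lt_apply_le_of_ne_one {α : Type*} [LinearOrder α] [WellFoundedLT α]
    {σ : Equiv.Perm α} (hσ : σ ≠ 1) :
    ∃ j₀, j₀ < σ j₀ ∧ ∀ j, σ j ≠ j → j₀ ≤ j ∧ j₀ ≤ σ j := by
  obtain ⟨j, hj⟩ : ∃ j, σ j ≠ j := by
    by_contra! h
    exact hσ (Equiv.ext h)
  obtain ⟨j₀, hj₀, hmin⟩ := wellFounded_lt.has_min {j | σ j ≠ j} ⟨j, hj⟩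
  have hle : ∀ j, σ j ≠ j → j₀ ≤ j := fun j hj => not_lt.mp (hmin j hj)
  have hmoved : ∀ j, σ j ≠ j → σ (σ j) ≠ σ j := fun j hj h => hj (σ.injective h)
  exact ⟨j₀, lt_of_le_of_ne (hle _ (hmoved _ hj₀)) (Ne.symm hj₀),
    fun j hj => ⟨hle j hj, hle _ (hmoved j hj)⟩⟩

lemma IsChainOn.add_two_mul_le_s2 {t : ℕ} {a : ℕ → ℕ} (ha : IsChainOn t a) {i k : ℕ}
    (hik : i ≤ k) (hk : k < t) : a (i + 1) + 2 * (k - i) ≤ a (k + 1) := by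
  induction k, hik using Nat.le_induction with
  | base => simp
  | succ k hik ih =>
    have := ha (k + 1) (by omega) hk
    have := ih (by omega)
    omega

def hankelTermExp (t : ℕ) (a : ℕ → ℕ) (σ : Equiv.Perm (Fin t)) : ℕ →₀ ℕ :=
  ∑ j : Fin t, Finsupp.single (a (j + 1) + σ j - j) 1

lemma minorOfChain_eq_sum (K : Type*) [CommRing K] (t : ℕ) (a : ℕ → ℕ) :
    minorOfChain K t a =
      ∑ σ : Equiv.Perm (Fin t), monomial (hankelTermExp t a σ) (Equiv.Perm.sign σ • (1 : K)) :=
  det_of_X _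

lemma hankelTermExp_one (t : ℕ) (a : ℕ → ℕ) : hankelTermExp t a 1 = chainExp t a := by
  rw [hankelTermExp, chainExp, ← Finset.Ico_add_one_right_eq_Icc, Finset.sum_Ico_eq_sum_range,
    ← Fin.sum_univ_eq_sum_range]
  simp [add_comm]

lemma IsChainOn.toLex_hankelTermExp_lt {t : ℕ} {a : ℕ → ℕ} (ha : IsChainOn t a)
    {σ : Equiv.Perm (Fin t)} (hσ : σ ≠ 1) :
    toLex (hankelTermExp t a σ) < toLex (hankelTermExp t a 1) := by
  obtain ⟨j₀, hj₀, hmoved⟩ := σ.exists_lt_apply_le_of_ne_one hσ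
  have hstrict : StrictMono fun j : Fin t => a (j + 1) := fun i k hik => by
    show a (i + 1) < a (k + 1)
    have := ha.add_two_mul_le_s2 hik.le k.isLt
    have : (i : ℕ) < k := hik
    omega
  have hbig : ∀ j, σ j ≠ j → a (j₀ + 1) < a (j + 1) + σ j - j := by
    intro j hj
    obtain ⟨hj₀j, hj₀σ⟩ := hmoved j hj
    have := ha.add_two_mul_le_s2 (Fin.le_def.mp hj₀j) j.isLt
    have := Fin.le_def.mp hj₀σ
    rcases hj₀j.lt_or_eq with hlt | rfl
    · have := Fin.lt_def.mp hlt
      omega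
    · have := Fin.lt_def.mp hj₀
      omega
  rw [hankelTermExp, hankelTermExp]
  simp only [Equiv.Perm.one_apply, Nat.add_sub_cancel]
  refine toLex_sum_single_lt _ (a (j₀ + 1)) (fun j _ hne => ?_) (fun j _ => ?_)
    ⟨j₀, Finset.mem_univ _, rfl⟩
  · have hj : σ j ≠ j := by rintro h; simp [h] at hne
    exact ⟨hbig j hj, hstrict.monotone (hmoved j hj).1⟩
  · by_cases hj : σ j = j
    · rw [hj, Nat.add_sub_cancel]
      exact hstrict.injective.ne (by rintro rfl; exact hj₀.ne' hj)
    · exact (hbig j hj).ne'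

theorem stmt2_general {K : Type*} [Field K] (n t : ℕ)
    (a : ℕ → ℕ) (hfit : FitsHankel 1 n t a) :
    IsLeadMono (minorOfChain K t a) (chainExp t a) := by
  rw [minorOfChain_eq_sum, ← hankelTermExp_one]
  refine isLeadMono_sum_monomial _ _ _ (Finset.mem_univ 1) (by simp) fun σ _ hσ => ?_
  exact degLexLt_sum_single _ (hfit.1.toLex_hankelTermExp_lt hσ)

/-- the diagonal term of any maximal minor of the Hankel matrix `H_t`
is the unique largest term w.r.t. degree lexicographic order (deg-lex is a diagonal
term order for Hankel matrices). -/
theorem stmt2 {K : Type*} [Field K] (n t : ℕ) (ht : 1 ≤ t) (htn : t ≤ (n + 1) / 2)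
    (a : ℕ → ℕ) (hfit : FitsHankel 1 n t a) :
    IsLeadMono (minorOfChain K t a) (chainExp t a) :=
  stmt2_general n t a hfit
end
end

section
/- Let a = (a_1,…,a_r) and b = (b_1,…,b_s) be chains with r ≥ s, and suppose the pair (a,b) is reduced modulo diagonal, column-wise, and anti-diagonal relations (with Δ = 0). Then (a,b) is a standard form if and only if (i) a_i ≤ b_i for all 1 ≤ i ≤ s, and (ii) either b_i ≤ a_{i+1} for all 1 ≤ i ≤ s-1, or there exists h such that b_h > a_{h+1} and b_h, b_{h+1}, …, b_s all lie in Interval(a). -/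
open MvPolynomial

noncomputable section

/-- Monotonicity with gaps for chains. -/
lemma chain_gap {r : ℕ} {a : ℕ → ℕ} (ha : IsChainOn r a) {i j : ℕ}
    (hi : 1 ≤ i) (hij : i ≤ j) (hjr : j ≤ r) : a i + 2 * (j - i) ≤ a j := by
  obtain ⟨d, rfl⟩ := Nat.exists_eq_add_of_le hij
  induction d with
  | zero => simp
  | succ d ih =>
    have h1 := ha (i + d) (by omega) (by omega)
    have h2 := ih (by omega) (by omega)
    have e : i + (d + 1) = i + d + 1 := rfl
    rw [e]
    omega

lemma interval_pair {r : ℕ} {a : ℕ → ℕ} {x : ℕ} (hx : x ∈ IntervalOf r a) :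
    ∃ j, 2 ≤ j ∧ j ≤ r ∧ x ≤ a j ∧ a j ≤ x + 1 := by
  obtain ⟨j, h2, hr, hc⟩ := hx
  exact ⟨j, h2, hr, by omega⟩

/-- The escape branch of the column-wise condition is impossible. -/
lemma no_col_run {r s : ℕ} {a b : ℕ → ℕ} (hsr : s ≤ r)
    (ha : IsChainOn r a) (hb : IsChainOn s b) {h : ℕ} (h1 : 1 ≤ h) (hhs : h ≤ s)
    (hba : b h < a h) (hI : ∀ i, h ≤ i → i ≤ s → a i ∈ IntervalOf s b) : False := by
  have key : ∀ t, h + t ≤ s →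
      ∃ j, h + t + 1 ≤ j ∧ j ≤ s ∧ a (h + t) ≤ b j ∧ b j ≤ a (h + t) + 1 := by
    intro t
    induction t with
    | zero =>
      intro hts
      obtain ⟨j, hj2, hjs, hxj, hjx⟩ := interval_pair (hI h le_rfl (by omega))
      refine ⟨j, ?_, hjs, hxj, hjx⟩
      by_contra hcon
      have := chain_gap hb (show 1 ≤ j by omega) (show j ≤ h by omega) (by omega)
      omega
    | succ t ih =>
      intro hts
      rw [show h + (t + 1) = h + t + 1 from rfl]
      obtain ⟨j, hj1, hjs, hxj, hjx⟩ := ih (by omega)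
      obtain ⟨j', hj2', hjs', hxj', hjx'⟩ :=
        interval_pair (hI (h + t + 1) (by omega) (by omega))
      have hstep := chain_gap ha (show 1 ≤ h + t by omega)
        (show h + t ≤ h + t + 1 by omega) (by omega)
      refine ⟨j', ?_, hjs', by omega, by omega⟩
      by_contra hcon
      have := chain_gap hb (show 1 ≤ j' by omega) (show j' ≤ j by omega) (by omega)
      omega
  obtain ⟨j, hj1, hjs, _, _⟩ := key (s - h) (by omega)
  omega

/-- The escape branch of the diagonal condition is impossible. -/
lemma no_diag_run {r s : ℕ} {a b : ℕ → ℕ} (hsr : s ≤ r)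
    (ha : IsChainOn r a) (hb : IsChainOn s b) {h : ℕ} (h1 : 1 ≤ h) (hhs : h ≤ s - 1)
    (hba : b (h + 1) < a h) (hI : ∀ i, h ≤ i → i ≤ s - 1 → a i ∈ IntervalOf s b) :
    False := by
  have hs2 : 2 ≤ s := by omega
  have key : ∀ t, h + t ≤ s - 1 →
      ∃ j, h + t + 2 ≤ j ∧ j ≤ s ∧ a (h + t) ≤ b j ∧ b j ≤ a (h + t) + 1 := by
    intro t
    induction t with
    | zero =>
      intro hts
      obtain ⟨j, hj2, hjs, hxj, hjx⟩ := interval_pair (hI h le_rfl (by omega))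
      refine ⟨j, ?_, hjs, hxj, hjx⟩
      by_contra hcon
      have := chain_gap hb (show 1 ≤ j by omega) (show j ≤ h + 1 by omega) (by omega)
      omega
    | succ t ih =>
      intro hts
      rw [show h + (t + 1) = h + t + 1 from rfl]
      obtain ⟨j, hj1, hjs, hxj, hjx⟩ := ih (by omega)
      obtain ⟨j', hj2', hjs', hxj', hjx'⟩ :=
        interval_pair (hI (h + t + 1) (by omega) (by omega))
      have hstep := chain_gap ha (show 1 ≤ h + t by omega)
        (show h + t ≤ h + t + 1 by omega) (by omega)
      refine ⟨j', ?_, hjs', by omega, by omega⟩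
      by_contra hcon
      have := chain_gap hb (show 1 ≤ j' by omega) (show j' ≤ j by omega) (by omega)
      omega
  obtain ⟨j, hj1, hjs, _, _⟩ := key (s - 1 - h) (by omega)
  omega

lemma omegaAD_le {r s : ℕ} (hsr : s ≤ r) : omegaAD r s ≤ s := by
  unfold omegaAD; split <;> omega

/-- Propagation of anti-diagonal violations, using absence of AD relations. -/
lemma ad_run {r s : ℕ} {a b : ℕ → ℕ} (hsr : s ≤ r) (hs : 1 ≤ s)
    (ha : IsChainOn r a) (hb : IsChainOn s b) (had : ¬ HasADRel r s a b)
    {h : ℕ} (h1 : 1 ≤ h) (hh : h ≤ s - 1) (hv : a (h + 1) < b h) :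
    ∀ t, h + t ≤ omegaAD r s →
      a (h + t + 1) < b (h + t) ∧
      ∃ j, h + t + 2 ≤ j ∧ j ≤ r ∧ b (h + t) ≤ a j ∧ a j ≤ b (h + t) + 1 := by
  have hadI : ∀ h' k, 1 ≤ h' → h' ≤ omegaAD r s → h' + 1 ≤ k → k ≤ r →
      a k < b h' → b h' ∈ IntervalOf r a := by
    intro h' k hh1 hh2 hk1 hk2 hak
    by_contra hno
    exact had ⟨h', k, hh1, hh2, hk1, hk2, hak, hno⟩
  have hads := omegaAD_le (s := s) hsr
  intro t
  induction t with
  | zero =>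
    intro hts
    refine ⟨hv, ?_⟩
    obtain ⟨j, hj2, hjr, hxj, hjx⟩ :=
      interval_pair (hadI h (h + 1) h1 (by omega) le_rfl (by omega) hv)
    refine ⟨j, ?_, hjr, hxj, hjx⟩
    by_contra hcon
    have := chain_gap ha (show 1 ≤ j by omega) (show j ≤ h + 1 by omega) (by omega)
    omega
  | succ t ih =>
    intro hts
    rw [show h + (t + 1) = h + t + 1 from rfl,
      show h + t + 1 + 1 = h + t + 2 from by omega]
    obtain ⟨hvt, j, hj1, hjr, hxj, hjx⟩ := ih (by omega)
    have hbstep := chain_gap hb (show 1 ≤ h + t by omega)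
      (show h + t ≤ h + t + 1 by omega) (by omega)
    have hmono := chain_gap ha (show 1 ≤ h + t + 2 by omega)
      (show h + t + 2 ≤ j by omega) hjr
    have hv' : a (h + t + 2) < b (h + t + 1) := by omega
    refine ⟨hv', ?_⟩
    obtain ⟨j', hj2', hjr', hxj', hjx'⟩ :=
      interval_pair (hadI (h + t + 1) (h + t + 2) (by omega) (by omega)
        (by omega) (by omega) hv')
    refine ⟨j', ?_, hjr', hxj', hjx'⟩
    by_contra hcon
    have := chain_gap ha (show 1 ≤ j' by omega) (show j' ≤ j by omega) hjr
    omega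

/-- for chains with `r ≥ s`, a pair reduced modulo all three kinds of
relations (Δ = 0) is a standard form iff (i) `a i ≤ b i` for `i ≤ s` and (ii) either
`b i ≤ a (i+1)` for all `i ≤ s-1`, or some `b h > a (h+1)` with `b h, …, b s ∈ Interval(a)`. -/
theorem stmt5 (r s : ℕ) (a b : ℕ → ℕ) (hrs : s ≤ r) (hs : 1 ≤ s)
    (ha : IsChainOn r a) (hb : IsChainOn s b)
    (hd : ¬ HasDiagRel r s a b) (hc : ¬ HasColRel r s a b) (had : ¬ HasADRel r s a b) :
    StdPair r s a b ↔
      ((∀ i, 1 ≤ i → i ≤ s → a i ≤ b i) ∧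
        ((∀ i, 1 ≤ i → i ≤ s - 1 → b i ≤ a (i + 1)) ∨
          (∃ h, 1 ≤ h ∧ h ≤ s - 1 ∧ a (h + 1) < b h ∧
            ∀ i, h ≤ i → i ≤ s → b i ∈ IntervalOf r a))) := by
  have hωc : omegaC r s = s := by unfold omegaC; split <;> omega
  have hωd : omegaD r s = s - 1 := by unfold omegaD; split <;> omega
  have hads := omegaAD_le (s := s) hrs
  have hadlow : s - 1 ≤ omegaAD r s := by unfold omegaAD; split <;> omega
  have hadgt : s < r → omegaAD r s = s := by intro h; unfold omegaAD; split <;> omega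
  have hadeq : r = s → omegaAD r s = s - 1 := by intro h; unfold omegaAD; split <;> omega
  have pairToMem : ∀ x j, 2 ≤ j → j ≤ r → x ≤ a j → a j ≤ x + 1 →
      x ∈ IntervalOf r a := by
    intro x j h2 hjr hx1 hx2
    exact ⟨j, h2, hjr, by omega⟩
  have keyviol : ∀ h, 1 ≤ h → h ≤ s - 1 → a (h + 1) < b h →
      (∀ i, h ≤ i → i ≤ s → b i ∈ IntervalOf r a) ∧ s < r := by
    intro h h1 hh hv
    have hr2 : s < r := by
      rcases Nat.lt_or_ge s r with hlt | hge
      · exact hlt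
      · exfalso
        obtain ⟨_, j, hj1, hjr, _, _⟩ :=
          ad_run hrs hs ha hb had h1 hh hv (s - 1 - h) (by omega)
        omega
    refine ⟨?_, hr2⟩
    intro i hhi his
    obtain ⟨_, j, hj1, hjr, hxj, hjx⟩ :=
      ad_run hrs hs ha hb had h1 hh hv (i - h) (by rw [hadgt hr2]; omega)
    simp only [show h + (i - h) = i from by omega] at hj1 hxj hjx
    exact pairToMem _ j (by omega) hjr hxj hjx
  constructor
  · rintro ⟨c1, c2, c3⟩
    have hi : ∀ i, 1 ≤ i → i ≤ s → a i ≤ b i := by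
      rcases c2 with hgood | ⟨h, h1, hhc, hba, hI⟩
      · intro i h1 his
        exact hgood i h1 (by omega)
      · exact (no_col_run hrs ha hb h1 (by omega) hba
          (fun i hhi his => hI i hhi (by omega))).elim
    refine ⟨hi, ?_⟩
    by_cases hall : ∀ i, 1 ≤ i → i ≤ s - 1 → b i ≤ a (i + 1)
    · exact Or.inl hall
    · right
      push_neg at hall
      obtain ⟨h, h1, hh, hv⟩ := hall
      obtain ⟨hmem, _⟩ := keyviol h h1 hh hv
      exact ⟨h, h1, hh, hv, hmem⟩
  · rintro ⟨hi, _⟩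
    refine ⟨Or.inl ?_, Or.inl ?_, ?_⟩
    · intro i h1 hid
      have hbb := hb i h1 (by omega)
      have := hi i h1 (by omega)
      omega
    · intro i h1 hic
      exact hi i h1 (by omega)
    · by_cases hall3 : ∀ i, 1 ≤ i → i ≤ omegaAD r s → b i ≤ a (i + 1)
      · exact Or.inl hall3
      · right
        push_neg at hall3
        obtain ⟨h, h1, hh, hv⟩ := hall3
        rcases Nat.lt_or_ge h s with hlt | hge
        · obtain ⟨hmem, hr2⟩ := keyviol h h1 (by omega) hv
          exact ⟨h, h1, hh, hv, fun i hhi hic => hmem i hhi (by omega)⟩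
        · have hes : h = s := by omega
          have hr2 : s < r := by
            by_contra hc2
            have := hadeq (by omega)
            omega
          subst hes
          refine ⟨h, h1, hh, hv, ?_⟩
          intro i hhi hic
          have hie : i = h := by omega
          subst hie
          by_contra hno
          exact had ⟨i, i + 1, h1, hh, le_rfl, by omega, hv, hno⟩

end
end

section
/- Let a = (a_1,…,a_r) and b = (b_1,…,b_s) be chains with r ≤ s forming a standard pair (a,b) with Δ = 0. Then a_r ≤ b_s. Symmetrically, if r > s then b_s ≤ a_r. -/
open MvPolynomial

noncomputable section

lemma chain_mono {r : ℕ} {a : ℕ → ℕ} (ha : IsChainOn r a) :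
    ∀ i j, 1 ≤ i → i ≤ j → j ≤ r → a i ≤ a j := by
  intro i j h1 hij hjr
  induction j with
  | zero => omega
  | succ j ih =>
    rcases Nat.lt_or_ge i (j + 1) with h | h
    · have h2 := ha j (by omega) (by omega)
      have h3 := ih (by omega) (by omega)
      omega
    · have : i = j + 1 := by omega
      simp [this]

lemma interval_le {s : ℕ} {b : ℕ → ℕ} (hb : IsChainOn s b) {x : ℕ}
    (hx : x ∈ IntervalOf s b) : x ≤ b s := by
  obtain ⟨i, h2, his, hx⟩ := hx
  have := chain_mono hb i s (by omega) his le_rfl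
  omega

/-- if `(a,b)` is a standard pair of chains with Δ = 0, then
`a r ≤ b s` when `r ≤ s`, and `b s ≤ a r` when `r > s`. -/
theorem stmt6 (r s : ℕ) (a b : ℕ → ℕ) (hr : 1 ≤ r) (hs : 1 ≤ s)
    (ha : IsChainOn r a) (hb : IsChainOn s b) (hstd : StdPair r s a b) :
    (r ≤ s → a r ≤ b s) ∧ (s < r → b s ≤ a r) := by
  constructor
  · intro hrs
    have hc : omegaC r s = r := by simp [omegaC, hrs]
    rcases hstd.2.1 with hcol | ⟨h, h1, hhc, hbh, hmem⟩
    · have h1 := hcol r hr (by omega)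
      have h2 := chain_mono hb r s hr hrs le_rfl
      omega
    · exact interval_le hb (hmem r (by omega) (by omega))
  · intro hsr
    have had : omegaAD r s = s := by simp [omegaAD]; omega
    rcases hstd.2.2 with hc | ⟨h, h1, hhc, hbh, hmem⟩
    · have h1 := hc s hs (by omega)
      have h2 := chain_mono ha (s + 1) r (by omega) (by omega) le_rfl
      omega
    · have hm := hmem s (by omega) (by omega)
      obtain ⟨i, h2, hir, hx⟩ := hm
      have := chain_mono ha i r (by omega) hir le_rfl
      omega

end
end

section
/- Let A be a standard tabel with rows (σ_i, a^{(i)}) and (σ_j, a^{(j)}) of lengths r_i < r_j. If the last entry a^{(i)}_{r_i} satisfies a^{(i)}_{r_i} ≤ σ_{j,2}, then a^{(i)}_{r_i} ≤ a^{(j)}_{r_j}; otherwise a^{(i)}_{r_i} > a^{(j)}_{r_j}. -/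
open MvPolynomial

noncomputable section

lemma chain_mono_s12 {r : ℕ} {b : ℕ → ℕ} (hb : IsChainOn r b) :
    ∀ p q, 1 ≤ p → p ≤ q → q ≤ r → b p ≤ b q := by
  intro p q hp hpq hqr
  induction q with
  | zero => omega
  | succ q ih =>
    rcases Nat.eq_or_lt_of_le hpq with h | h
    · exact h ▸ le_rfl
    · have h1 : b q + 1 < b (q + 1) := hb q (by omega) (by omega)
      have h2 : b p ≤ b q := ih (by omega) (by omega)
      omega

/-- in a standard tabel, for rows `i`, `j` with `len i < len j`:
if the last entry of row `i` is at most `σ_{j,2}` then it is at most the last entry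
of row `j`, and otherwise it is strictly larger. -/
theorem stmt12 (n l : ℕ) (lab : ℕ → ℕ × ℕ) (len : ℕ → ℕ) (ent : ℕ → ℕ → ℕ)
    (htab : IsTabel n l lab len ent) (hstd : StdTabel n l lab len ent)
    (i j : ℕ) (hi : 1 ≤ i) (hil : i ≤ l) (hj : 1 ≤ j) (hjl : j ≤ l) (hij : i ≠ j)
    (hlen : len i < len j) :
    (ent i (len i) ≤ (lab j).2 → ent i (len i) ≤ ent j (len j)) ∧
    ((lab j).2 < ent i (len i) → ent j (len j) < ent i (len i)) := by
  obtain ⟨hrows, _⟩ := htab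
  obtain ⟨hlabi, hri, hchi, hfiti⟩ := hrows i hi hil
  obtain ⟨hlabj, hsj, hchj, hfitj⟩ := hrows j hj hjl
  -- last entry of row j is ≤ (lab j).2
  have hbs : ent j (len j) ≤ (lab j).2 := by
    have := (hfitj (len j) hsj le_rfl).2
    omega
  -- first entry of row i is ≥ 1, hence so is its last
  have ha1 : 1 ≤ ent i 1 := by
    have h1 := (hfiti 1 le_rfl hri).1
    have : 1 ≤ (lab i).1 := by
      rcases hlabi with h | h | h | h <;> simp [h]
    omega
  have har1 : 1 ≤ ent i (len i) := by
    have := chain_mono_s12 hchi 1 (len i) le_rfl hri le_rfl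
    omega
  refine ⟨?_, fun hlt => by omega⟩
  intro hle
  by_contra hgt
  push_neg at hgt
  have hnotin : ent i (len i) ∉ IntervalOf (len j) (ent j) := by
    intro hmem
    have := interval_le hchj hmem
    omega
  rcases Nat.lt_or_ge i j with hij' | hij'
  · -- i < j : use the column condition
    have hstdp := hstd i j hi hij' hjl
    have hΔ : delta n (lab i) (lab j) (len i) (len j) (ent i) (ent j) = 0 := by
      unfold delta
      split
      · next hc =>
        rcases hc with ⟨_, harn, hg2⟩ | ⟨hsr, _, _⟩ <;> omega
      · rfl
    have hc : omegaC' (delta n (lab i) (lab j) (len i) (len j) (ent i) (ent j))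
        (len i) (len j) = len i := by
      rw [hΔ]; unfold omegaC'; split <;> omega
    rcases hstdp.2.1 with hcol | ⟨h, hh1, hhc, _, hint⟩
    · have h1 : ent i (len i) ≤ ent j (len i) := hcol (len i) hri (by omega)
      have h2 : ent j (len i) ≤ ent j (len j) :=
        chain_mono_s12 hchj (len i) (len j) hri (le_of_lt hlen) le_rfl
      omega
    · rw [hc] at hhc
      exact hnotin (hint (len i) (by omega) (by omega))
  · -- j < i : use the anti-diagonal condition
    have hij'' : j < i := by omega
    have hstdp := hstd j i hj hij'' hil
    have hΔ : delta n (lab j) (lab i) (len j) (len i) (ent j) (ent i) = 0 := by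
      unfold delta
      split
      · next hc =>
        rcases hc with ⟨hsr, _, _⟩ | ⟨_, harn, hg2⟩ <;> omega
      · rfl
    have hadr : omegaAD' (delta n (lab j) (lab i) (len j) (len i) (ent j) (ent i))
        (len j) (len i) = len i := by
      rw [hΔ]; unfold omegaAD'; split <;> omega
    rcases hstdp.2.2 with had | ⟨h, hh1, hhc, _, hint⟩
    · have h1 : ent i (len i) ≤ ent j (len i + 1) := by
        have := had (len i) hri (by omega)
        omega
      have h2 : ent j (len i + 1) ≤ ent j (len j) :=
        chain_mono_s12 hchj (len i + 1) (len j) (by omega) (by omega) le_rfl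
      omega
    · rw [hadr] at hhc
      exact hnotin (hint (len i) (by omega) (by omega))

end
end

section
/- Let G be the set of marked binomials {m - m' : m a non-standard quadratic monomial of the form z_{σ,a} z_{γ,b} or x_i z_{σ,a}, m' its standard form}, with the non-standard monomial marked. Then G is marked coherently: there exists a term order ≤_α on R = S[z̄] such that in_{≤_α}(g) is the marked (non-standard) monomial for every g ∈ G. -/
open MvPolynomial

noncomputable section

/-- Index type for the z-variables of `R = S[z̄]`: a label, a length, and a chain. -/
abbrev ZIdx : Type := (ℕ × ℕ) × ℕ × (ℕ → ℕ)

/-- Monomials of `R = S[z̄]` as pairs of exponent vectors (x-part, z-part),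
written additively. -/
abbrev MonR : Type := (ℕ →₀ ℕ) × (ZIdx →₀ ℕ)

/-- The monomial `x_i` of `R`. -/
def xMon (i : ℕ) : MonR := (Finsupp.single i 1, 0)

/-- The monomial `z_{σ,a}` of `R` (with `a` a chain of length `r`). -/
def zMon (σ : ℕ × ℕ) (r : ℕ) (a : ℕ → ℕ) : MonR := (0, Finsupp.single (σ, r, a) 1)

/-- One reduction step for a non-standard factor `x_i · z_{σ,a}`: replace `x_i` by
`x_{a t}` and `a t` by `i`, where `a t < i ≤ a (t+1)` (or `a r < i ≤ σ₂`). -/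
def XZMove (σ : ℕ × ℕ) (r : ℕ) (p q : ℕ × (ℕ → ℕ)) : Prop :=
  ∃ t, 1 ≤ t ∧ t ≤ r ∧ p.2 t < p.1 ∧ (t = r → p.1 ≤ σ.2) ∧ (t < r → p.1 ≤ p.2 (t + 1)) ∧
    q.1 = p.2 t ∧ ∀ i, q.2 i = if i = t then p.1 else p.2 i

/-!
Monomials are compared first by an additive weight vector in `ℕ →₀ ℤ`, lexicographically,
and ties are broken lexicographically on the exponents; this is a term order. The weight of
`z_{σ,a}` (`a` of length `r`) has the coordinates `1`, `0`, `-∑ i · a i`, `rank σ · ∑ a i`,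
`r · ∑ a i`, then `-a j · ∑_{i > j} a i` for `j = 1, …, r`; that of `x_i` is `1`, `i`, `0, …`.

An `x z` move replaces `x_i` by `x_{a t}` with `a t < i`, lowering the second coordinate.
A diagonal or anti-diagonal move exchanges a block of one chain with a block of smaller entries
sitting `k - h ≥ 1` positions later in the other chain, which raises the total `∑ i · a i`.
A column move keeps that total and transfers a positive amount `E` from the first chain to the
second; for `(σ,a) ≥_c (γ,b)` this lowers `rank · ∑` when the labels differ, `length · ∑` when
the lengths differ, and otherwise the coordinate of the first position where `a` and `b`
differ, provided `(a 1, …, a r) ≤ (b 1, …, b r)` lexicographically. That invariant holds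
initially by `≥_c` and survives column moves; once a diagonal move has occurred, the third
coordinate stays strictly lower anyway.
-/

namespace Relation.ReflTransGen

variable {α β γ : Type*} [Preorder β] [Preorder γ] {R : α → α → Prop} {f : α → β} {g : α → γ}

theorem eq_or_lt_of_descent {P : α → Prop} (hfg : ∀ x y, g x < g y → f x < f y)
    (hstep : ∀ x y, R x y → g y < g x ∨ (g y = g x ∧ (P x → f y < f x ∧ P y)))
    {x y : α} (hx : P x) (hxy : ReflTransGen R x y) : y = x ∨ f y < f x := by
  suffices ∀ y, ReflTransGen R x y → y = x ∨ g y < g x ∨ (g y = g x ∧ f y < f x ∧ P y) by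
    rcases this y hxy with h | h | ⟨-, h, -⟩
    exacts [.inl h, .inr (hfg _ _ h), .inr h]
  intro y hxy
  induction hxy with
  | refl => exact .inl rfl
  | @tail z w _ hzw ih =>
    right
    rcases ih with rfl | hz | ⟨hgz, hfz, hPz⟩ <;> rcases hstep z w hzw with hw | ⟨hgw, hw⟩
    · exact .inl hw
    · exact .inr ⟨hgw, hw hx⟩
    · exact .inl (hw.trans hz)
    · exact .inl (hgw.trans_lt hz)
    · exact .inl (hgz ▸ hw)
    · obtain ⟨hfw, hPw⟩ := hw hPz
      exact .inr ⟨hgw.trans hgz, hfw.trans hfz, hPw⟩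

end Relation.ReflTransGen

theorem Relation.ReflTransGen.eq_or_lt_of_strictAnti {α β : Type*} [Preorder β]
    {R : α → α → Prop} {f : α → β} (hstep : ∀ x y, R x y → f y < f x) {x y : α}
    (hxy : ReflTransGen R x y) : y = x ∨ f y < f x :=
  (reflTransGen_iff_eq_or_transGen.mp hxy).imp_right fun h => by
    clear hxy
    induction h with
    | single h => exact hstep _ _ h
    | tail _ h ih => exact (hstep _ _ h).trans ih

lemma IsChainOn.lt_of_lt {r : ℕ} {u : ℕ → ℕ} (hu : IsChainOn r u) {i j : ℕ} (hi : 1 ≤ i)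
    (hij : i < j) (hj : j ≤ r) : u i < u j := by
  induction j, hij using Nat.le_induction with
  | base => exact (Nat.lt_succ_self _).trans (hu i hi hj)
  | succ j hij ih => exact (ih (by omega)).trans ((Nat.lt_succ_self _).trans (hu j (by omega) hj))

lemma IsChainOn.le_of_le {r : ℕ} {u : ℕ → ℕ} (hu : IsChainOn r u) {i j : ℕ} (hi : 1 ≤ i)
    (hij : i ≤ j) (hj : j ≤ r) : u i ≤ u j :=
  hij.eq_or_lt.elim (fun h => h ▸ le_rfl) fun h => (hu.lt_of_lt hi h hj).le

lemma expDeg_chainExp (r : ℕ) (u : ℕ → ℕ) : expDeg (chainExp r u) = r := by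
  have : expDeg = Finsupp.degree := funext fun d => (Finsupp.degree_apply d).symm ▸ rfl
  simp [this, chainExp]

lemma Finsupp.toLex_lt_of_apply {α N : Type*} [LT α] [Zero N] [LT N] {u v : α →₀ N} (i : α)
    (hlow : ∀ j < i, u j = v j) (hi : u i < v i) : toLex u < toLex v :=
  Finsupp.Lex.lt_iff.mpr ⟨i, hlow, hi⟩

namespace MarkedCoherence

open Finset

def posSum (r : ℕ) (u : ℕ → ℕ) : ℤ := ∑ i ∈ Icc 1 r, (i : ℤ) * u i

def tailSum (r j : ℕ) (u : ℕ → ℕ) : ℤ := ∑ i ∈ Icc (j + 1) r, (u i : ℤ)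

lemma sum_Icc_update_block {A r lo hi : ℕ} (hA : A ≤ lo) (hr : hi ≤ r) (F : ℕ → ℕ → ℤ)
    {u u' g : ℕ → ℕ} (hu' : ∀ i, u' i = if lo ≤ i ∧ i ≤ hi then g i else u i) :
    ∑ i ∈ Icc A r, F i (u' i) =
      ∑ i ∈ Icc A r, F i (u i) + ∑ i ∈ Icc lo hi, (F i (g i) - F i (u i)) := by
  have hblock : ∑ i ∈ Icc lo hi, (F i (g i) - F i (u i)) =
      ∑ i ∈ Icc lo hi, (F i (u' i) - F i (u i)) :=
    sum_congr rfl fun i hi => by rw [hu', if_pos (mem_Icc.mp hi)]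
  rw [hblock, sum_subset (Icc_subset_Icc hA hr) fun i _ hi => by
    rw [hu', if_neg (by simpa using hi), sub_self], sum_sub_distrib]
  ring

section ColumnSwap

variable {r s lo hi : ℕ} {a b a' b' : ℕ → ℕ}

lemma tailSum_swap_left {j : ℕ} (hj : j < lo) (hr : hi ≤ r)
    (ha' : ∀ i, a' i = if lo ≤ i ∧ i ≤ hi then b i else a i) :
    tailSum r j a' = tailSum r j a - ∑ i ∈ Icc lo hi, ((a i : ℤ) - b i) := by
  rw [tailSum, tailSum, sum_Icc_update_block hj hr (fun _ x => (x : ℤ)) ha', sub_eq_add_neg,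
    ← sum_neg_distrib]
  simp only [neg_sub]

lemma tailSum_swap_right {j : ℕ} (hj : j < lo) (hs : hi ≤ s)
    (hb' : ∀ i, b' i = if lo ≤ i ∧ i ≤ hi then a i else b i) :
    tailSum s j b' = tailSum s j b + ∑ i ∈ Icc lo hi, ((a i : ℤ) - b i) :=
  sum_Icc_update_block hj hs (fun _ x => (x : ℤ)) hb'

lemma posSum_add_posSum_swap (hlo : 1 ≤ lo) (hr : hi ≤ r) (hs : hi ≤ s)
    (ha' : ∀ i, a' i = if lo ≤ i ∧ i ≤ hi then b i else a i)
    (hb' : ∀ i, b' i = if lo ≤ i ∧ i ≤ hi then a i else b i) :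
    posSum r a' + posSum s b' = posSum r a + posSum s b := by
  simp only [posSum]
  rw [sum_Icc_update_block hlo hr (fun i x => (i : ℤ) * x) ha',
    sum_Icc_update_block hlo hs (fun i x => (i : ℤ) * x) hb']
  have : ∑ i ∈ Icc lo hi, ((i : ℤ) * b i - i * a i) + ∑ i ∈ Icc lo hi, ((i : ℤ) * a i - i * b i)
      = 0 := by
    rw [← sum_add_distrib]
    exact sum_eq_zero fun i _ => by ring
  linarith

lemma sum_block_sub_pos (hlohi : lo ≤ hi) (hlt : ∀ i, lo ≤ i → i ≤ hi → b i < a i) :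
    0 < ∑ i ∈ Icc lo hi, ((a i : ℤ) - b i) :=
  sum_pos (fun i hi => sub_pos.mpr (by have := mem_Icc.mp hi; exact_mod_cast hlt i this.1 this.2))
    ⟨lo, mem_Icc.mpr ⟨le_rfl, hlohi⟩⟩

end ColumnSwap

/-- The gain is `(k - h) · ∑_{i = h-v}^{h} (a i - b (i + k - h))`. -/
lemma posSum_lt_posSum_shiftSwap {r s h k v : ℕ} {a b a' b' : ℕ → ℕ} (hh : 1 ≤ h)
    (hk : h + 1 ≤ k) (hv : v ≤ h - 1) (hr : h ≤ r) (hs : k ≤ s)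
    (hlt : ∀ i, i ≤ v → b (k - i) < a (h - i))
    (ha' : ∀ i, a' i = if h - v ≤ i ∧ i ≤ h then b (i + k - h) else a i)
    (hb' : ∀ i, b' i = if k - v ≤ i ∧ i ≤ k then a (i + h - k) else b i) :
    posSum r a + posSum s b < posSum r a' + posSum s b' := by
  obtain ⟨c, rfl⟩ : ∃ c, k = h + c := ⟨k - h, by omega⟩
  have e1 := sum_Icc_update_block (A := 1) (by omega) hr (fun i x => (i : ℤ) * x) ha'
  have e2 := sum_Icc_update_block (A := 1) (by omega) hs (fun i x => (i : ℤ) * x) hb'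
  rw [show h + c - v = h - v + c by omega, ← map_add_right_Icc, sum_map] at e2
  have hgain : ∑ i ∈ Icc (h - v) h, ((i : ℤ) * b (i + (h + c) - h) - i * a i) +
      ∑ i ∈ Icc (h - v) h, (((i + c : ℕ) : ℤ) * a (i + c + h - (h + c)) -
        ((i + c : ℕ) : ℤ) * b (i + c)) =
      ∑ i ∈ Icc (h - v) h, (c : ℤ) * ((a i : ℤ) - b (i + c)) := by
    rw [← sum_add_distrib]
    refine sum_congr rfl fun i _ => ?_
    rw [show i + (h + c) - h = i + c by omega, show i + c + h - (h + c) = i by omega]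
    push_cast
    ring
  have hpos : 0 < ∑ i ∈ Icc (h - v) h, (c : ℤ) * ((a i : ℤ) - b (i + c)) := by
    refine sum_pos (fun i hi => ?_) ⟨h, mem_Icc.mpr ⟨by omega, le_rfl⟩⟩
    have hi := mem_Icc.mp hi
    have := hlt (h - i) (by omega)
    rw [show h + c - (h - i) = i + c by omega, show h - (h - i) = i by omega] at this
    have : (b (i + c) : ℤ) < a i := by exact_mod_cast this
    have : (0 : ℤ) < c := by exact_mod_cast (show 0 < c by omega)
    positivity
  simp only [posSum, addRightEmbedding_apply] at e1 e2 ⊢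
  linarith

def xWeight (i : ℕ) : ℕ →₀ ℤ := Finsupp.single 0 1 + Finsupp.single 1 (i : ℤ)

def zWeight (n : ℕ) : ZIdx → ℕ →₀ ℤ
  | (σ, r, u) =>
    Finsupp.single 0 1 - Finsupp.single 2 (posSum r u)
      + Finsupp.single 3 (labelRank n σ * tailSum r 0 u) + Finsupp.single 4 (r * tailSum r 0 u)
      - ∑ j ∈ Icc 1 r, Finsupp.single (j + 5) (u j * tailSum r j u)

def weight (n : ℕ) (p : MonR) : ℕ →₀ ℤ :=
  Finsupp.linearCombination ℕ xWeight p.1 + Finsupp.linearCombination ℕ (zWeight n) p.2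

section WeightApply

variable (n : ℕ) (σ : ℕ × ℕ) (r : ℕ) (u : ℕ → ℕ)

@[simp] lemma zWeight_apply_zero (v : ZIdx) : zWeight n v 0 = 1 := by
  obtain ⟨σ, r, u⟩ := v
  simp [zWeight]

@[simp] lemma zWeight_apply_one : zWeight n (σ, r, u) 1 = 0 := by
  simp [zWeight]

@[simp] lemma zWeight_apply_two : zWeight n (σ, r, u) 2 = -posSum r u := by
  simp [zWeight]

@[simp] lemma zWeight_apply_three :
    zWeight n (σ, r, u) 3 = labelRank n σ * tailSum r 0 u := by
  simp [zWeight]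

@[simp] lemma zWeight_apply_four : zWeight n (σ, r, u) 4 = r * tailSum r 0 u := by
  simp [zWeight]

lemma zWeight_apply_add_five (j : ℕ) :
    zWeight n (σ, r, u) (j + 5) = if 1 ≤ j ∧ j ≤ r then -(u j * tailSum r j u) else 0 := by
  simp [zWeight, Finsupp.single_apply]
  split_ifs <;> simp

@[simp] lemma xWeight_apply_zero (i : ℕ) : xWeight i 0 = 1 := by simp [xWeight]

@[simp] lemma xWeight_apply_one (i : ℕ) : xWeight i 1 = i := by simp [xWeight]

end WeightApply

lemma weight_add (n : ℕ) (p q : MonR) : weight n (p + q) = weight n p + weight n q := by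
  simp only [weight, Prod.fst_add, Prod.snd_add, map_add]
  abel

lemma weight_apply_zero (n : ℕ) (p : MonR) :
    weight n p 0 = (Finsupp.degree p.1 + Finsupp.degree p.2 : ℕ) := by
  simp [weight, Finsupp.linearCombination_apply, Finsupp.degree_apply,
    Finsupp.sum]

lemma weight_xMon_add_zMon (n i : ℕ) (σ : ℕ × ℕ) (r : ℕ) (a : ℕ → ℕ) :
    weight n (xMon i + zMon σ r a) = xWeight i + zWeight n (σ, r, a) := by
  simp [weight, xMon, zMon]

lemma weight_zMon_add_zMon (n : ℕ) (σ γ : ℕ × ℕ) (r s : ℕ) (a b : ℕ → ℕ) :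
    weight n (zMon σ r a + zMon γ s b) = zWeight n (σ, r, a) + zWeight n (γ, s, b) := by
  simp [weight, zMon]

/-- Any linear order on the `z`-indices will do: it only breaks ties between monomials. -/
def ZIdxLO : Type := ZIdx

instance : LinearOrder ZIdxLO := IsWellOrder.linearOrder WellOrderingRel

def termKey (n : ℕ) (p : MonR) : Lex (ℕ →₀ ℤ) ×ₗ (Lex (ℕ →₀ ℕ) ×ₗ Lex (ZIdxLO →₀ ℕ)) :=
  toLex (toLex (weight n p), toLex (toLex p.1, toLex (p.2 : ZIdxLO →₀ ℕ)))

def termOrder (n : ℕ) (p q : MonR) : Prop := termKey n p < termKey n q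

lemma termKey_injective (n : ℕ) : Function.Injective (termKey n) := by
  intro p q h
  simp only [termKey, toLex_inj, Prod.mk.injEq] at h
  exact Prod.ext h.2.1 h.2.2

lemma termKey_add (n : ℕ) (p q : MonR) : termKey n (p + q) = termKey n p + termKey n q := by
  simp only [termKey, weight_add]
  rfl

lemma isStrictTotalOrder_termOrder (n : ℕ) : IsStrictTotalOrder MonR (termOrder n) :=
  (termKey_injective n).isStrictTotalOrder_onFun (r := (· < ·))

lemma termOrder_add_right (n : ℕ) {p q : MonR} (w : MonR) (h : termOrder n p q) :
    termOrder n (p + w) (q + w) := by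
  simpa only [termOrder, termKey_add] using add_lt_add_of_lt_of_le h (le_refl (termKey n w))

lemma termOrder_of_weight_lt (n : ℕ) {p q : MonR} (h : toLex (weight n p) < toLex (weight n q)) :
    termOrder n p q :=
  Prod.Lex.toLex_lt_toLex.mpr (.inl h)

lemma termOrder_zero_of_ne_zero (n : ℕ) {m : MonR} (hm : m ≠ 0) : termOrder n 0 m := by
  refine termOrder_of_weight_lt n (Finsupp.toLex_lt_of_apply 0 (by simp) ?_)
  have : Finsupp.degree m.1 + Finsupp.degree m.2 ≠ 0 := by
    simpa [Finsupp.degree_eq_zero_iff, Prod.ext_iff] using hm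
  rw [show weight n 0 = 0 by simp [weight], weight_apply_zero]
  simp only [Finsupp.coe_zero, Pi.zero_apply]
  omega

def pairWeight (n : ℕ) (σ γ : ℕ × ℕ) (r s : ℕ) (p : (ℕ → ℕ) × (ℕ → ℕ)) : ℕ →₀ ℤ :=
  zWeight n (σ, r, p.1) + zWeight n (γ, s, p.2)

/-- A column move `ColMoveP`, indexed by its block `lo = h - v, …, hi = h`. -/
def IsColumnSwap (r s : ℕ) (p q : (ℕ → ℕ) × (ℕ → ℕ)) : Prop :=
  ∃ lo hi, 1 ≤ lo ∧ lo ≤ hi ∧ hi ≤ r ∧ hi ≤ s ∧ (∀ i, lo ≤ i → i ≤ hi → p.2 i < p.1 i) ∧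
    (∀ i, q.1 i = if lo ≤ i ∧ i ≤ hi then p.2 i else p.1 i) ∧
    (∀ i, q.2 i = if lo ≤ i ∧ i ≤ hi then p.1 i else p.2 i)

def TupleLexLE (r : ℕ) (a b : ℕ → ℕ) : Prop :=
  ∀ j, 1 ≤ j → j ≤ r → (∀ i, 1 ≤ i → i < j → a i = b i) → a j ≤ b j

section PairWeight

variable {n : ℕ} {σ γ : ℕ × ℕ} {r s : ℕ} {p q : (ℕ → ℕ) × (ℕ → ℕ)}

lemma toLex_pairWeight_lt_of_apply_two_lt
    (h : pairWeight n σ γ r s p 2 < pairWeight n σ γ r s q 2) :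
    toLex (pairWeight n σ γ r s p) < toLex (pairWeight n σ γ r s q) :=
  Finsupp.toLex_lt_of_apply 2 (fun j hj => by interval_cases j <;> simp [pairWeight]) h

lemma MoveL.pairWeight_two_lt_or_isColumnSwap (hmove : MoveL n σ γ r s p.1 p.2 q.1 q.2) :
    pairWeight n σ γ r s q 2 < pairWeight n σ γ r s p 2 ∨ IsColumnSwap r s p q := by
  simp only [pairWeight, Finsupp.coe_add, Pi.add_apply, zWeight_apply_two]
  rcases hmove with ⟨h, k, v, hh, hd, hk, hks, -, -, hv, hlt, -, ha', hb'⟩ |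
    ⟨h, v, hh, hc, -, -, hv, hlt, -, ha', hb'⟩ |
    ⟨h, k, v, hh, had, hk, hkr, -, -, hv, hlt, -, ha', hb'⟩
  · have hhr : h ≤ r := hd.trans (by unfold omegaD'; split_ifs <;> omega)
    have := posSum_lt_posSum_shiftSwap hh hk hv hhr hks hlt ha' hb'
    exact .inl (by linarith)
  · have hcr : omegaC' (delta n σ γ r s p.1 p.2) r s ≤ min r s := by
      unfold omegaC'; split_ifs <;> omega
    refine .inr ⟨h - v, h, by omega, by omega, by omega, by omega, fun i hi hi' => ?_, ha', hb'⟩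
    have := hlt (h - i) (by omega)
    rwa [show h - (h - i) = i by omega] at this
  · have hhs : h ≤ s := had.trans (by unfold omegaAD'; split_ifs <;> omega)
    have := posSum_lt_posSum_shiftSwap hh hk hv hhs hkr hlt hb' ha'
    exact .inl (by linarith)

end PairWeight

lemma TupleLexLE.exists_first_lt {r lo : ℕ} {a b : ℕ → ℕ} (hle : TupleLexLE r a b)
    (hlo : 1 ≤ lo) (hlor : lo ≤ r) (hba : b lo < a lo) :
    ∃ j < lo, 1 ≤ j ∧ (∀ i, 1 ≤ i → i < j → a i = b i) ∧ a j < b j := by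
  classical
  have hex : ∃ j, 1 ≤ j ∧ j ≤ r ∧ a j ≠ b j := ⟨lo, hlo, hlor, hba.ne'⟩
  obtain ⟨hj, hjr, hne⟩ := Nat.find_spec hex
  have hagree : ∀ i, 1 ≤ i → i < Nat.find hex → a i = b i := fun i hi hij =>
    not_not.mp fun h => Nat.find_min hex hij ⟨hi, by omega, h⟩
  have hlt := (hle _ hj hjr hagree).lt_of_ne hne
  refine ⟨Nat.find hex, (Nat.find_min' hex ⟨hlo, hlor, hba.ne'⟩).lt_of_ne fun h => ?_, hj,
    hagree, hlt⟩
  rw [h] at hlt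
  omega

namespace IsColumnSwap

variable {n : ℕ} {σ γ : ℕ × ℕ} {r s : ℕ} {p q : (ℕ → ℕ) × (ℕ → ℕ)}

lemma pairWeight_two (hcol : IsColumnSwap r s p q) :
    pairWeight n σ γ r s q 2 = pairWeight n σ γ r s p 2 := by
  obtain ⟨lo, hi, hlo, -, hr, hs, -, ha', hb'⟩ := hcol
  simp only [pairWeight, Finsupp.coe_add, Pi.add_apply, zWeight_apply_two]
  linarith [posSum_add_posSum_swap hlo hr hs ha' hb']

lemma exists_tailSum (hcol : IsColumnSwap r s p q) : ∃ E > 0,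
    tailSum r 0 q.1 = tailSum r 0 p.1 - E ∧ tailSum s 0 q.2 = tailSum s 0 p.2 + E := by
  obtain ⟨lo, hi, hlo, hlohi, hr, hs, hlt, ha', hb'⟩ := hcol
  exact ⟨_, sum_block_sub_pos hlohi hlt, tailSum_swap_left hlo hr ha',
    tailSum_swap_right hlo hs hb'⟩

lemma pairWeight_three (hcol : IsColumnSwap r s p q) (hσγ : σ = γ) :
    pairWeight n σ γ r s q 3 = pairWeight n σ γ r s p 3 := by
  obtain ⟨E, -, ha, hb⟩ := hcol.exists_tailSum
  simp only [pairWeight, Finsupp.coe_add, Pi.add_apply, zWeight_apply_three, ha, hb, hσγ]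
  ring

lemma pairWeight_four (hcol : IsColumnSwap r r p q) :
    pairWeight n σ γ r r q 4 = pairWeight n σ γ r r p 4 := by
  obtain ⟨E, -, ha, hb⟩ := hcol.exists_tailSum
  simp only [pairWeight, Finsupp.coe_add, Pi.add_apply, zWeight_apply_four, ha, hb]
  ring

lemma lt_of_labelRank_lt (hcol : IsColumnSwap r s p q) (hrank : labelRank n γ < labelRank n σ) :
    toLex (pairWeight n σ γ r s q) < toLex (pairWeight n σ γ r s p) := by
  obtain ⟨E, hE, ha, hb⟩ := hcol.exists_tailSum
  refine Finsupp.toLex_lt_of_apply 3 (fun j hj => ?_) ?_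
  · interval_cases j
    · simp [pairWeight]
    · simp [pairWeight]
    · exact hcol.pairWeight_two
  · have : (labelRank n γ : ℤ) < labelRank n σ := by exact_mod_cast hrank
    simp only [pairWeight, Finsupp.coe_add, Pi.add_apply, zWeight_apply_three, ha, hb]
    nlinarith

lemma lt_of_length_lt (hcol : IsColumnSwap r s p q) (hσγ : σ = γ) (hsr : s < r) :
    toLex (pairWeight n σ γ r s q) < toLex (pairWeight n σ γ r s p) := by
  obtain ⟨E, hE, ha, hb⟩ := hcol.exists_tailSum
  refine Finsupp.toLex_lt_of_apply 4 (fun j hj => ?_) ?_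
  · interval_cases j
    · simp [pairWeight]
    · simp [pairWeight]
    · exact hcol.pairWeight_two
    · exact hcol.pairWeight_three hσγ
  · have : (s : ℤ) < r := by exact_mod_cast hsr
    simp only [pairWeight, Finsupp.coe_add, Pi.add_apply, zWeight_apply_four, ha, hb]
    nlinarith

lemma tupleLexLE (hcol : IsColumnSwap r r p q) (hle : TupleLexLE r p.1 p.2) :
    TupleLexLE r q.1 q.2 := by
  obtain ⟨lo, hi, hlo, hlohi, hr, -, hlt, ha', hb'⟩ := hcol
  obtain ⟨j₀, hj₀lo, hj₀, hagree, hj₀lt⟩ :=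
    hle.exists_first_lt hlo (hlohi.trans hr) (hlt lo le_rfl hlohi)
  have hlow : ∀ i < lo, q.1 i = p.1 i ∧ q.2 i = p.2 i := fun i hi =>
    ⟨by rw [ha', if_neg (by omega)], by rw [hb', if_neg (by omega)]⟩
  intro j hj hjr hpre
  have hjj₀ : j ≤ j₀ := by
    by_contra h
    have := hpre j₀ hj₀ (by omega)
    rw [(hlow j₀ hj₀lo).1, (hlow j₀ hj₀lo).2] at this
    omega
  rw [(hlow j (by omega)).1, (hlow j (by omega)).2]
  rcases hjj₀.lt_or_eq with h | rfl
  · exact (hagree j hj h).le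
  · exact hj₀lt.le

/-- The weight drops at coordinate `j₀ + 5`, where `j₀ < lo` is the first position at which
the two chains differ. -/
lemma lt_of_tupleLexLE (hcol : IsColumnSwap r r p q) (hle : TupleLexLE r p.1 p.2) :
    toLex (pairWeight n σ σ r r q) < toLex (pairWeight n σ σ r r p) := by
  have hbelow : ∀ c < 5, pairWeight n σ σ r r q c = pairWeight n σ σ r r p c := fun c hc => by
    interval_cases c
    · simp [pairWeight]
    · simp [pairWeight]
    · exact hcol.pairWeight_two
    · exact hcol.pairWeight_three rfl
    · exact hcol.pairWeight_four
  obtain ⟨lo, hi, hlo, hlohi, hr, -, hlt, ha', hb'⟩ := hcol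
  obtain ⟨j₀, hj₀lo, hj₀, hagree, hj₀lt⟩ :=
    hle.exists_first_lt hlo (hlohi.trans hr) (hlt lo le_rfl hlohi)
  have hlow : ∀ i < lo, q.1 i = p.1 i ∧ q.2 i = p.2 i := fun i hi =>
    ⟨by rw [ha', if_neg (by omega)], by rw [hb', if_neg (by omega)]⟩
  have htail : ∀ j < lo,
      tailSum r j q.1 = tailSum r j p.1 - ∑ i ∈ Icc lo hi, ((p.1 i : ℤ) - p.2 i) ∧
      tailSum r j q.2 = tailSum r j p.2 + ∑ i ∈ Icc lo hi, ((p.1 i : ℤ) - p.2 i) :=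
    fun j hj => ⟨tailSum_swap_left hj hr ha', tailSum_swap_right hj hr hb'⟩
  refine Finsupp.toLex_lt_of_apply (j₀ + 5) (fun c hc => ?_) ?_
  · rcases lt_or_ge c 5 with hc5 | hc5
    · exact hbelow c hc5
    obtain ⟨j, rfl⟩ : ∃ j, c = j + 5 := ⟨c - 5, by omega⟩
    simp only [pairWeight, Finsupp.coe_add, Pi.add_apply, zWeight_apply_add_five]
    split_ifs with hj
    · rw [(hlow j (by omega)).1, (hlow j (by omega)).2, (htail j (by omega)).1,
        (htail j (by omega)).2, hagree j hj.1 (by omega)]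
      ring
    · rfl
  · simp only [pairWeight, Finsupp.coe_add, Pi.add_apply, zWeight_apply_add_five,
      if_pos (⟨hj₀, by omega⟩ : 1 ≤ j₀ ∧ j₀ ≤ r)]
    rw [(hlow j₀ hj₀lo).1, (hlow j₀ hj₀lo).2, (htail j₀ hj₀lo).1, (htail j₀ hj₀lo).2]
    have : (p.1 j₀ : ℤ) < p.2 j₀ := by exact_mod_cast hj₀lt
    have := sum_block_sub_pos hlohi hlt
    nlinarith

end IsColumnSwap

lemma chainExp_apply (r : ℕ) (u : ℕ → ℕ) (t : ℕ) :
    chainExp r u t = #{i ∈ Icc 1 r | u i = t} := by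
  rw [card_filter]
  simp [chainExp, Finsupp.single_apply]

/-- If two chains first differ at position `j` with `b j < a j`, then `x_{b j}` divides the
monomial of `b` but not that of `a`, while both agree in the variables before `x_{b j}`. -/
lemma toLex_chainExp_lt_of_first_lt {r j : ℕ} {a b : ℕ → ℕ} (ha : IsChainOn r a)
    (hb : IsChainOn r b) (hj : 1 ≤ j) (hjr : j ≤ r) (hagree : ∀ i, 1 ≤ i → i < j → a i = b i)
    (hlt : b j < a j) : toLex (chainExp r a) < toLex (chainExp r b) := by
  refine Finsupp.toLex_lt_of_apply (b j) (fun t ht => ?_) ?_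
  · simp only [chainExp_apply]
    refine congrArg card (filter_congr fun i hi => ?_)
    have hi := mem_Icc.mp hi
    rcases lt_or_ge i j with h | h
    · rw [hagree i hi.1 h]
    · have := ha.le_of_le hj h hi.2
      have := hb.le_of_le hj h hi.2
      omega
  · simp only [chainExp_apply]
    rw [card_eq_zero.mpr (filter_eq_empty_iff.mpr fun i hi => ?_)]
    · exact card_pos.mpr ⟨j, mem_filter.mpr ⟨mem_Icc.mpr ⟨hj, hjr⟩, rfl⟩⟩
    · have hi := mem_Icc.mp hi
      rcases lt_or_ge i j with h | h
      · have := hb.lt_of_lt hi.1 h hjr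
        rw [hagree i hi.1 h]
        omega
      · have := ha.le_of_le hj h hi.2
        omega

lemma tupleLexLE_of_chainExp {r : ℕ} {a b : ℕ → ℕ} (ha : IsChainOn r a) (hb : IsChainOn r b)
    (h : chainExp r b = chainExp r a ∨ DegLexLt (chainExp r b) (chainExp r a)) :
    TupleLexLE r a b := by
  intro j hj hjr hagree
  by_contra! hlt
  have := toLex_chainExp_lt_of_first_lt ha hb hj hjr hagree hlt
  rcases h with h | h | ⟨-, h⟩
  · exact lt_irrefl _ (h ▸ this)
  · rw [expDeg_chainExp, expDeg_chainExp] at h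
    exact lt_irrefl _ h
  · exact lt_asymm h this

lemma GeC.cases {n : ℕ} {σ γ : ℕ × ℕ} {r s : ℕ} {a b : ℕ → ℕ} (hA : LabeledChain n σ r a)
    (hB : LabeledChain n γ s b) (h : GeC n σ r a γ s b) :
    labelRank n γ < labelRank n σ ∨ (σ = γ ∧ s < r) ∨ (σ = γ ∧ s = r ∧ TupleLexLE r a b) := by
  rcases h with h | ⟨rfl, h⟩
  · exact .inl h
  have hsr : s ≤ r := by
    rcases h with h | h | ⟨h, -⟩
    · simpa only [expDeg_chainExp] using (congrArg expDeg h).le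
    · simpa only [expDeg_chainExp] using h.le
    · simpa only [expDeg_chainExp] using h.le
  rcases hsr.lt_or_eq with hsr | rfl
  · exact .inr (.inl ⟨rfl, hsr⟩)
  · exact .inr (.inr ⟨rfl, rfl, tupleLexLE_of_chainExp hA.2.2.1 hB.2.2.1 h⟩)

def FirstLexLE (σ γ : ℕ × ℕ) (r s : ℕ) (p : (ℕ → ℕ) × (ℕ → ℕ)) : Prop :=
  σ = γ → s = r → TupleLexLE r p.1 p.2

lemma MoveL.pairWeight_descent {n : ℕ} {σ γ : ℕ × ℕ} {r s : ℕ} {p q : (ℕ → ℕ) × (ℕ → ℕ)}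
    (hcase : labelRank n γ < labelRank n σ ∨ (σ = γ ∧ s < r) ∨ (σ = γ ∧ s = r))
    (hmove : MoveL n σ γ r s p.1 p.2 q.1 q.2) :
    pairWeight n σ γ r s q 2 < pairWeight n σ γ r s p 2 ∨
      (pairWeight n σ γ r s q 2 = pairWeight n σ γ r s p 2 ∧ (FirstLexLE σ γ r s p →
        toLex (pairWeight n σ γ r s q) < toLex (pairWeight n σ γ r s p) ∧
          FirstLexLE σ γ r s q)) := by
  refine (MoveL.pairWeight_two_lt_or_isColumnSwap hmove).imp_right fun hcol =>
    ⟨hcol.pairWeight_two, fun hP => ?_⟩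
  rcases hcase with h | ⟨rfl, h⟩ | ⟨rfl, rfl⟩
  · exact ⟨hcol.lt_of_labelRank_lt h, fun hσγ => absurd (hσγ ▸ h) (lt_irrefl _)⟩
  · exact ⟨hcol.lt_of_length_lt rfl h, fun _ hsr => absurd hsr h.ne⟩
  · exact ⟨hcol.lt_of_tupleLexLE (hP rfl rfl), fun _ _ => hcol.tupleLexLE (hP rfl rfl)⟩

theorem termOrder_of_reflTransGen_moveL {n : ℕ} {σ γ : ℕ × ℕ} {r s : ℕ} {a b c d : ℕ → ℕ}
    (hA : LabeledChain n σ r a) (hB : LabeledChain n γ s b) (hGeC : GeC n σ r a γ s b)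
    (hreach : Relation.ReflTransGen
      (fun p q : (ℕ → ℕ) × (ℕ → ℕ) => MoveL n σ γ r s p.1 p.2 q.1 q.2) (a, b) (c, d))
    (hne : (c, d) ≠ (a, b)) :
    termOrder n (zMon σ r c + zMon γ s d) (zMon σ r a + zMon γ s b) := by
  have hcase := GeC.cases hA hB hGeC
  have hP : FirstLexLE σ γ r s (a, b) := by
    rintro rfl rfl
    rcases hcase with h | h | ⟨-, -, h⟩
    exacts [absurd h (lt_irrefl _), absurd h.2 (lt_irrefl _), h]
  have hcase' : labelRank n γ < labelRank n σ ∨ (σ = γ ∧ s < r) ∨ (σ = γ ∧ s = r) :=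
    hcase.imp_right (Or.imp_right fun h => ⟨h.1, h.2.1⟩)
  apply termOrder_of_weight_lt
  rw [weight_zMon_add_zMon, weight_zMon_add_zMon]
  exact (Relation.ReflTransGen.eq_or_lt_of_descent (f := fun p => toLex (pairWeight n σ γ r s p))
    (g := fun p => pairWeight n σ γ r s p 2) (P := FirstLexLE σ γ r s)
    (fun _ _ => toLex_pairWeight_lt_of_apply_two_lt) (fun _ _ => MoveL.pairWeight_descent hcase') hP
    hreach).resolve_left hne

theorem termOrder_of_reflTransGen_xzMove (n : ℕ) {σ : ℕ × ℕ} {r i j : ℕ} {a c : ℕ → ℕ}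
    (hreach : Relation.ReflTransGen (XZMove σ r) (i, a) (j, c)) (hne : (j, c) ≠ (i, a)) :
    termOrder n (xMon j + zMon σ r c) (xMon i + zMon σ r a) := by
  have hstep : ∀ p q, XZMove σ r p q →
      toLex (xWeight q.1 + zWeight n (σ, r, q.2)) <
        toLex (xWeight p.1 + zWeight n (σ, r, p.2)) := by
    rintro p q ⟨t, -, -, hlt, -, -, hq, -⟩
    refine Finsupp.toLex_lt_of_apply 1 (fun k hk => ?_) ?_
    · obtain rfl : k = 0 := by omega
      simp
    · simpa [hq] using hlt
  apply termOrder_of_weight_lt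
  rw [weight_xMon_add_zMon, weight_xMon_add_zMon]
  exact (Relation.ReflTransGen.eq_or_lt_of_strictAnti hstep hreach).resolve_left hne

end MarkedCoherence

theorem stmt15_general (n : ℕ) :
    ∃ lt : MonR → MonR → Prop,
      IsStrictTotalOrder MonR lt ∧
      (∀ m : MonR, m ≠ 0 → lt 0 m) ∧
      (∀ p q w : MonR, lt p q → lt (p + w) (q + w)) ∧
      (∀ (σ γ : ℕ × ℕ) (r s : ℕ) (a b c d : ℕ → ℕ),
        LabeledChain n σ r a → LabeledChain n γ s b → GeC n σ r a γ s b →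
        ¬ StdPairL n σ γ r s a b →
        Relation.ReflTransGen
          (fun p q : (ℕ → ℕ) × (ℕ → ℕ) => MoveL n σ γ r s p.1 p.2 q.1 q.2)
          (a, b) (c, d) →
        StdPairL n σ γ r s c d →
        lt (zMon σ r c + zMon γ s d) (zMon σ r a + zMon γ s b)) ∧
      (∀ (σ : ℕ × ℕ) (r : ℕ) (a c : ℕ → ℕ) (i j : ℕ),
        LabeledChain n σ r a → ¬ XZStd i σ r a →
        Relation.ReflTransGen (XZMove σ r) (i, a) (j, c) →
        XZStd j σ r c →
        lt (xMon j + zMon σ r c) (xMon i + zMon σ r a)) := by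
  refine ⟨MarkedCoherence.termOrder n, MarkedCoherence.isStrictTotalOrder_termOrder n,
    fun m hm => MarkedCoherence.termOrder_zero_of_ne_zero n hm,
    fun p q w h => MarkedCoherence.termOrder_add_right n w h, ?_, ?_⟩
  · intro σ γ r s a b c d hA hB hGeC hnstd hreach hstd
    refine MarkedCoherence.termOrder_of_reflTransGen_moveL hA hB hGeC hreach ?_
    rintro ⟨⟩
    exact hnstd hstd
  · intro σ r a c i j _ hnstd hreach hstd
    refine MarkedCoherence.termOrder_of_reflTransGen_xzMove n hreach ?_
    rintro ⟨⟩
    exact hnstd hstd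

/-- the set `G` of marked binomials (non-standard quadratic monomial
minus its standard form, the non-standard one marked) is marked coherently: there is
a term order `lt` on the monomials of `R` for which each marked (non-standard)
monomial is the leading term of its binomial. -/
theorem stmt15 (n : ℕ) (hn : 2 ≤ n) :
    ∃ lt : MonR → MonR → Prop,
      IsStrictTotalOrder MonR lt ∧
      (∀ m : MonR, m ≠ 0 → lt 0 m) ∧
      (∀ p q w : MonR, lt p q → lt (p + w) (q + w)) ∧
      (∀ (σ γ : ℕ × ℕ) (r s : ℕ) (a b c d : ℕ → ℕ),
        LabeledChain n σ r a → LabeledChain n γ s b → GeC n σ r a γ s b →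
        ¬ StdPairL n σ γ r s a b →
        Relation.ReflTransGen
          (fun p q : (ℕ → ℕ) × (ℕ → ℕ) => MoveL n σ γ r s p.1 p.2 q.1 q.2)
          (a, b) (c, d) →
        StdPairL n σ γ r s c d →
        lt (zMon σ r c + zMon γ s d) (zMon σ r a + zMon γ s b)) ∧
      (∀ (σ : ℕ × ℕ) (r : ℕ) (a c : ℕ → ℕ) (i j : ℕ),
        LabeledChain n σ r a → ¬ XZStd i σ r a →
        Relation.ReflTransGen (XZMove σ r) (i, a) (j, c) →
        XZStd j σ r c →
        lt (xMon j + zMon σ r c) (xMon i + zMon σ r a)) :=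
  stmt15_general n

end
end

section
/- Let n = 6 and let I = I_2^{(1,6)} · I_2^{(3,6)} in S = K[x_1,…,x_6], where I_2^{(1,6)} and I_2^{(3,6)} are the ideals of 2×2 minors of the Hankel matrices on x_1,…,x_6 and x_3,…,x_6 respectively. Then I is strictly contained in the intersection I_2^{(3,6)} ∩ (I_2^{(1,6)})^{(2)} ∩ (I_1^{(2,6)})^{(3)} of the symbolic powers of its associated primes. -/
open MvPolynomial

noncomputable section

/-!
Write `P = I_2^{(1,6)}`, `J = I_2^{(3,6)}`, `m = I_1^{(2,6)}`. The product `P J` lies in `J`, in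
`P ^ 2` because `J ⊆ P`, and in `m ^ 3` because `P ⊆ m` and `J ⊆ m ^ 2`; the multiplier `1` works
since `P` and `m` are proper. For strictness take the `3 × 3` Hankel determinant `f` on
`x_2, …, x_6`. Expanding along its first row puts it in `J`, an explicit quadratic identity in
the `2 × 2` minors gives `x_2 f ∈ P ^ 2` with `x_2 ∉ P`, and `f ∈ m ^ 3` by degree. But
`f ∉ P J`: the substitution `x_4 ↦ t`, `x_i ↦ 0` otherwise, sends every `2 × 2` minor into
`(t ^ 2)`, hence `P J` into `(t ^ 4)`, while it sends `f` to `-t ^ 3`.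
-/

section Hankel

variable {K : Type*} [CommRing K]

theorem minorOfChain_mem_hankelIdeal {lo hi r : ℕ} {a : ℕ → ℕ} (h : FitsHankel lo hi r a) :
    minorOfChain K r a ∈ hankelIdeal K lo hi r :=
  Ideal.subset_span ⟨a, h, rfl⟩

theorem map_minorOfChain {R F : Type*} [CommRing R] [FunLike F (MvPolynomial ℕ K) R]
    [RingHomClass F (MvPolynomial ℕ K) R] (φ : F) (r : ℕ) (a : ℕ → ℕ) :
    φ (minorOfChain K r a) =
      (Matrix.of fun i j : Fin r => φ (X (a ((j : ℕ) + 1) + (i : ℕ) - (j : ℕ)))).det := by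
  rw [minorOfChain, ← RingHom.coe_coe φ, RingHom.map_det]
  rfl

theorem hankelIdeal_le_ker {R : Type*} [CommRing R] (φ : MvPolynomial ℕ K →+* R) (lo hi : ℕ)
    {r : ℕ} (h : ∀ a, φ (minorOfChain K r a) = 0) :
    hankelIdeal K lo hi r ≤ RingHom.ker φ := by
  rw [hankelIdeal, Ideal.span_le]
  rintro _ ⟨a, _, rfl⟩
  exact h a

theorem minorOfChain_two (a : ℕ → ℕ) :
    minorOfChain K 2 a = X (a 1) * X (a 2) - X (a 2 - 1) * X (a 1 + 1) := by
  simp [minorOfChain, Matrix.det_fin_two]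

theorem hankelIdeal_mono {lo lo' hi hi' r : ℕ} (hlo : lo ≤ lo') (hhi : hi' ≤ hi) :
    hankelIdeal K lo' hi' r ≤ hankelIdeal K lo hi r :=
  Ideal.span_mono fun _ ⟨a, ⟨hchain, hbound⟩, hf⟩ =>
    ⟨a, ⟨hchain, fun j hj₁ hj₂ => by have := hbound j hj₁ hj₂; omega⟩, hf⟩

theorem X_mem_hankelIdeal_one {lo hi i : ℕ} (h₁ : lo ≤ i) (h₂ : i ≤ hi) :
    (X i : MvPolynomial ℕ K) ∈ hankelIdeal K lo hi 1 := by
  have hfit : FitsHankel lo hi 1 fun _ => i :=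
    ⟨fun _ _ _ => by omega, fun _ _ _ => by dsimp only; omega⟩
  simpa [minorOfChain] using minorOfChain_mem_hankelIdeal (K := K) hfit

theorem X_mul_X_sub_mem_hankelIdeal_two {lo hi a b : ℕ} (h₁ : lo ≤ a) (h₂ : a + 2 ≤ b)
    (h₃ : b ≤ hi) :
    (X a * X b - X (b - 1) * X (a + 1) : MvPolynomial ℕ K) ∈ hankelIdeal K lo hi 2 := by
  have hfit : FitsHankel lo hi 2 fun i => if i ≤ 1 then a else b :=
    ⟨fun i _ _ => by simp [show i = 1 by omega]; omega,
     fun j _ _ => by interval_cases j <;> simp <;> omega⟩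
  simpa [minorOfChain_two] using minorOfChain_mem_hankelIdeal (K := K) hfit

theorem hankelIdeal_le_pow (lo hi r : ℕ) :
    hankelIdeal K lo hi r ≤ hankelIdeal K lo hi 1 ^ r := by
  rw [hankelIdeal, Ideal.span_le]
  rintro _ ⟨a, ⟨_, hbound⟩, rfl⟩
  rw [SetLike.mem_coe, minorOfChain, Matrix.det_apply]
  refine Ideal.sum_mem _ fun σ _ => ?_
  rw [Units.smul_def, zsmul_eq_mul]
  refine Ideal.mul_mem_left _ _ ?_
  have hprod := Ideal.prod_mem_prod (s := (Finset.univ : Finset (Fin r)))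
    (I := fun _ => hankelIdeal K lo hi 1) fun j _ =>
      X_mem_hankelIdeal_one (K := K) (i := a ((j : ℕ) + 1) + (σ j : ℕ) - (j : ℕ))
      (by have := (hbound (j + 1) (by omega) (by omega)).1; omega)
      (by have := (hbound (j + 1) (by omega) (by omega)).2; omega)
  simpa [Finset.prod_const] using hprod

theorem hankelIdeal_two_le_succ_one (lo hi : ℕ) :
    hankelIdeal K lo hi 2 ≤ hankelIdeal K (lo + 1) hi 1 := by
  rw [hankelIdeal, Ideal.span_le]
  rintro _ ⟨a, ⟨hchain, hbound⟩, rfl⟩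
  have h₁ := hbound 1 le_rfl one_le_two
  have h₂ := hbound 2 one_le_two le_rfl
  have h₁₂ := hchain 1 le_rfl one_lt_two
  rw [SetLike.mem_coe, minorOfChain_two]
  exact Ideal.sub_mem _ (Ideal.mul_mem_left _ _ (X_mem_hankelIdeal_one (by omega) (by omega)))
    (Ideal.mul_mem_left _ _ (X_mem_hankelIdeal_one (by omega) (by omega)))

theorem one_notMem_hankelIdeal [Nontrivial K] (lo hi : ℕ) {r : ℕ} (hr : 0 < r) :
    1 ∉ hankelIdeal K lo hi r := by
  have : Nonempty (Fin r) := ⟨⟨0, hr⟩⟩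
  intro h
  have h₀ := hankelIdeal_le_ker constantCoeff lo hi (fun a => ?_) h
  · simp at h₀
  rw [map_minorOfChain]
  simp only [constantCoeff_X]
  exact Matrix.det_zero

theorem X_notMem_hankelIdeal [Nontrivial K] (lo hi : ℕ) {r : ℕ} (hr : 2 ≤ r) (i : ℕ) :
    X i ∉ hankelIdeal K lo hi r := by
  intro h
  have h₀ := hankelIdeal_le_ker (eval fun _ => (1 : K)) lo hi (fun a => ?_) h
  · simp at h₀
  rw [map_minorOfChain]
  exact Matrix.det_zero_of_row_eq (i := ⟨0, by omega⟩) (j := ⟨1, by omega⟩) (by simp)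
    (by ext; simp)

theorem hankelIdeal_le_comap_span_X_pow (v : ℕ → K) (lo hi r : ℕ) :
    hankelIdeal K lo hi r ≤ (Ideal.span {(Polynomial.X : Polynomial K) ^ r}).comap
      (aeval (R := K) fun i => Polynomial.C (v i) * Polynomial.X) := by
  rw [hankelIdeal, Ideal.span_le]
  rintro _ ⟨a, _, rfl⟩
  rw [SetLike.mem_coe, Ideal.mem_comap, map_minorOfChain, Ideal.mem_span_singleton]
  have hsmul : (Matrix.of fun i j : Fin r => aeval (fun i => Polynomial.C (v i) * Polynomial.X)
      (X (a ((j : ℕ) + 1) + (i : ℕ) - (j : ℕ)) : MvPolynomial ℕ K)) =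
      (Polynomial.X : Polynomial K) •
        Matrix.of fun i j : Fin r => Polynomial.C (v (a ((j : ℕ) + 1) + i - j)) := by
    ext i j
    simp only [Matrix.of_apply, Matrix.smul_apply, aeval_X, smul_eq_mul, mul_comm]
  rw [hsmul, Matrix.det_smul, Fintype.card_fin]
  exact dvd_mul_right _ _

end Hankel

def minorTwoFourSix (K : Type*) [CommRing K] : MvPolynomial ℕ K :=
  minorOfChain K 3 (2 * ·)

section MinorTwoFourSix

variable {K : Type*} [CommRing K]

theorem minorTwoFourSix_eq :
    minorTwoFourSix K = X 2 * (X 4 * X 6 - X 5 * X 5) - X 3 * (X 3 * X 6 - X 5 * X 4) +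
      X 4 * (X 3 * X 5 - X 4 * X 4) := by
  simp [minorTwoFourSix, minorOfChain, Matrix.det_fin_three]
  ring

theorem minorTwoFourSix_mem : minorTwoFourSix K ∈ hankelIdeal K 3 6 2 := by
  rw [minorTwoFourSix_eq]
  refine Ideal.add_mem _ (Ideal.sub_mem _ ?_ ?_) ?_ <;>
    exact Ideal.mul_mem_left _ _ (X_mul_X_sub_mem_hankelIdeal_two (by norm_num) (by norm_num)
      (by norm_num))

theorem X_two_mul_minorTwoFourSix_mem : X 2 * minorTwoFourSix K ∈ hankelIdeal K 1 6 2 ^ 2 := by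
  have hexpand : X 2 * minorTwoFourSix K =
      (X 1 * X 4 - X 3 * X 2) * (X 3 * X 6 - X 5 * X 4) -
        (X 1 * X 3 - X 2 * X 2) * (X 4 * X 6 - X 5 * X 5) -
        (X 1 * X 5 - X 4 * X 2) * (X 3 * X 5 - X 4 * X 4) := by
    rw [minorTwoFourSix_eq]; ring
  rw [hexpand, sq]
  refine Ideal.sub_mem _ (Ideal.sub_mem _ ?_ ?_) ?_ <;>
    exact Ideal.mul_mem_mul (X_mul_X_sub_mem_hankelIdeal_two (by norm_num) (by norm_num)
      (by norm_num)) (X_mul_X_sub_mem_hankelIdeal_two (by norm_num) (by norm_num) (by norm_num))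

theorem minorTwoFourSix_mem_pow : minorTwoFourSix K ∈ hankelIdeal K 2 6 1 ^ 3 :=
  hankelIdeal_le_pow 2 6 3 <| minorOfChain_mem_hankelIdeal
    ⟨fun _ _ _ => by dsimp only; omega, fun _ _ _ => by dsimp only; omega⟩

theorem minorTwoFourSix_notMem_mul [Nontrivial K] :
    minorTwoFourSix K ∉ hankelIdeal K 1 6 2 * hankelIdeal K 3 6 2 := by
  set v : ℕ → K := fun i => if i = 4 then 1 else 0
  intro h
  have hmem := Ideal.le_comap_mul _ (Ideal.mul_mono (hankelIdeal_le_comap_span_X_pow v 1 6 2)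
    (hankelIdeal_le_comap_span_X_pow v 3 6 2) h)
  rw [Ideal.mem_comap, Ideal.span_singleton_mul_span_singleton, ← pow_add,
    Ideal.mem_span_singleton, minorTwoFourSix_eq] at hmem
  have himage : aeval (fun i => Polynomial.C (v i) * Polynomial.X)
      (X 2 * (X 4 * X 6 - X 5 * X 5) - X 3 * (X 3 * X 6 - X 5 * X 4) +
        X 4 * (X 3 * X 5 - X 4 * X 4) : MvPolynomial ℕ K) = -Polynomial.X ^ 3 := by
    simp [v]; ring
  rw [himage, dvd_neg] at hmem
  simpa using Polynomial.X_pow_dvd_iff.mp hmem 3 (by norm_num)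

end MinorTwoFourSix

/-- for `n = 6`, the product `I = I_2^{(1,6)} · I_2^{(3,6)}` is strictly
contained in `I_2^{(3,6)} ∩ (I_2^{(1,6)})^{(2)} ∩ (I_1^{(2,6)})^{(3)}`, where symbolic
powers are the saturations `P^{(k)} = {f | ∃ s ∉ P, s·f ∈ P^k}`. -/
theorem stmt19 {K : Type*} [Field K] :
    (∀ f ∈ hankelIdeal K 1 6 2 * hankelIdeal K 3 6 2,
      f ∈ hankelIdeal K 3 6 2 ∧
        (∃ s ∉ hankelIdeal K 1 6 2, s * f ∈ hankelIdeal K 1 6 2 ^ 2) ∧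
        (∃ s ∉ hankelIdeal K 2 6 1, s * f ∈ hankelIdeal K 2 6 1 ^ 3)) ∧
    (∃ f : MvPolynomial ℕ K,
      (f ∈ hankelIdeal K 3 6 2 ∧
        (∃ s ∉ hankelIdeal K 1 6 2, s * f ∈ hankelIdeal K 1 6 2 ^ 2) ∧
        (∃ s ∉ hankelIdeal K 2 6 1, s * f ∈ hankelIdeal K 2 6 1 ^ 3)) ∧
      f ∉ hankelIdeal K 1 6 2 * hankelIdeal K 3 6 2) := by
  have hJP : hankelIdeal K 3 6 2 ≤ hankelIdeal K 1 6 2 := hankelIdeal_mono (by norm_num) le_rfl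
  have hPm : hankelIdeal K 1 6 2 ≤ hankelIdeal K 2 6 1 := hankelIdeal_two_le_succ_one 1 6
  have hJm : hankelIdeal K 3 6 2 ≤ hankelIdeal K 2 6 1 ^ 2 :=
    (hankelIdeal_le_pow 3 6 2).trans
      (Ideal.pow_right_mono (hankelIdeal_mono (by norm_num) le_rfl) 2)
  have hPJm : hankelIdeal K 1 6 2 * hankelIdeal K 3 6 2 ≤ hankelIdeal K 2 6 1 ^ 3 := by
    rw [pow_succ']
    exact Ideal.mul_mono hPm hJm
  have hm : (1 : MvPolynomial ℕ K) ∉ hankelIdeal K 2 6 1 := one_notMem_hankelIdeal 2 6 one_pos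
  refine ⟨fun f hf => ⟨Ideal.mul_le_right hf, ⟨1, one_notMem_hankelIdeal 1 6 two_pos, ?_⟩,
      ⟨1, hm, ?_⟩⟩, minorTwoFourSix K, ⟨minorTwoFourSix_mem,
      ⟨X 2, X_notMem_hankelIdeal 1 6 le_rfl 2, X_two_mul_minorTwoFourSix_mem⟩,
      ⟨1, hm, by rw [one_mul]; exact minorTwoFourSix_mem_pow⟩⟩, minorTwoFourSix_notMem_mul⟩
  · rw [one_mul, sq]
    exact Ideal.mul_mono_right hJP hf
  · rw [one_mul]
    exact hPJm hf
end
end
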